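/- arXiv:2104.09826 — 3 statements merged into one kernel-verified Lean document; each statement's English description precedes it below -/
import Mathlib

section
/- Let d ≥ 1 and 0 < c₀ < 1. For every pair of multi-indices α, β ∈ ℕ₀^d there is a constant C = C(α, β, c₀, d) such that for all (x,y) ∈ 𝔇(c₀) with x ≠ y, |∂_x^α ∂_y^β S_c(x,y)| ≤ C |x−y|^{1−|α|−|β|}. -/
open MeasureTheory Matrix Filter
open scoped ENNReal Topology

noncomputable section

namespace Paper

abbrev Ed (n : ℕ) := EuclideanSpace ℝ (Fin n)

/-! ### Exponents and sets -/

/-- The critical exponent `p₀(d)`. -/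
def p0 (d : ℕ) : ℝ :=
  if d % 2 = 0 then 2 * (3 * (d : ℝ) + 2) / (3 * (d : ℝ) - 2)
  else 2 * (3 * (d : ℝ) + 1) / (3 * (d : ℝ) - 3)

/-- The critical summability index `δ(d,p)` for `p : ℝ≥0∞`. -/
def deltaExp (d : ℕ) (p : ℝ≥0∞) : ℝ :=
  max ((d : ℝ) * |1 / p.toReal - 1 / 2| - 1 / 2) 0

/-- The critical summability index `δ(d,p)` for real `p`. -/
def deltaExpR (d : ℕ) (p : ℝ) : ℝ :=
  max ((d : ℝ) * |1 / p - 1 / 2| - 1 / 2) 0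

/-- `𝒟(x,y) = 1 + ⟨x,y⟩² − |x|² − |y|²`. -/
def Dfun {n : ℕ} (x y : Ed n) : ℝ :=
  1 + (inner ℝ x y : ℝ) ^ 2 - ‖x‖ ^ 2 - ‖y‖ ^ 2

/-- The set `𝔇(c)`. -/
def frakD (n : ℕ) (c : ℝ) : Set (Ed n × Ed n) :=
  { q | ‖q.1‖ ≤ 1 - c ∧ ‖q.2‖ ≤ 1 - c ∧ c ^ 2 < Dfun q.1 q.2 }

/-! ### Operator norms and cutoffs -/

/-- `L^p → L^p` operator norm (as a value in `ℝ≥0∞`). -/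
def opNorm {X : Type*} [MeasureSpace X] (p : ℝ≥0∞)
    (T : (X → ℂ) → (X → ℂ)) : ℝ≥0∞ :=
  ⨆ f : { f : X → ℂ // eLpNorm f p volume ≤ 1 }, eLpNorm (T f.1) p volume

/-- `χ_E T χ_F`. -/
def cut {X : Type*} (E F : Set X) (T : (X → ℂ) → (X → ℂ)) :
    (X → ℂ) → (X → ℂ) :=
  fun f => E.indicator (T (F.indicator f))

/-- `M_χ T M_χ'`, multiplication cutoffs. -/
def mulCut {X : Type*} (χ χ' : X → ℝ) (T : (X → ℂ) → (X → ℂ)) :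
    (X → ℂ) → (X → ℂ) :=
  fun f x => (χ x : ℂ) * T (fun y => (χ' y : ℂ) * f y) x

/-- The dilated set `√λ ⬝ E`. -/
def dilate {X : Type*} [SMul ℝ X] (lam : ℝ) (E : Set X) : Set X :=
  (fun x => Real.sqrt lam • x) '' E

/-! ### Hermite functions, projections, Bochner-Riesz means -/

/-- Hermite polynomial (Rodrigues' formula). -/
def hermitePoly (k : ℕ) (t : ℝ) : ℝ :=
  (-1 : ℝ) ^ k * Real.exp (t ^ 2) * iteratedDeriv k (fun s => Real.exp (-s ^ 2)) t

/-- `L²`-normalized Hermite function. -/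
def hermiteFun (k : ℕ) (t : ℝ) : ℝ :=
  ((2 : ℝ) ^ k * (Nat.factorial k : ℝ) * Real.sqrt Real.pi) ^ (-(1 / 2 : ℝ)) *
    hermitePoly k t * Real.exp (-t ^ 2 / 2)

/-- `d`-dimensional Hermite function `Φ_α`. -/
def PhiFun {d : ℕ} (α : Fin d → ℕ) (x : Ed d) : ℝ :=
  ∏ i, hermiteFun (α i) (x i)

/-- Kernel of the Hermite spectral projection `Π_λ^H`. -/
def hermiteProjKernel (d lam : ℕ) (x y : Ed d) : ℝ :=
  ∑' α : Fin d → ℕ, if 2 * (∑ i, α i) + d = lam then PhiFun α x * PhiFun α y else 0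

/-- The Hermite spectral projection `Π_λ^H`. -/
def hermiteProj (d lam : ℕ) (f : Ed d → ℂ) : Ed d → ℂ :=
  fun x => ∫ y, (hermiteProjKernel d lam x y : ℂ) * f y

/-- The Hermite Bochner-Riesz mean `S_λ^δ(H)`. -/
def hermiteBR (d : ℕ) (δ lam : ℝ) (f : Ed d → ℂ) : Ed d → ℂ :=
  fun x => ∑' k : ℕ,
    (((max (1 - (2 * (k : ℝ) + d) / lam) 0) ^ δ : ℝ) : ℂ) * hermiteProj d (2 * k + d) f x

/-- Inverse Fourier transform `ζ̌`. -/
def invFT (ζ : ℝ → ℂ) (τ : ℝ) : ℂ :=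
  ((2 * Real.pi : ℝ))⁻¹ • ∫ t : ℝ, ζ t * Complex.exp (Complex.I * (t : ℂ) * (τ : ℂ))

/-- Kernel of the rescaled operator `[ζ]_λ^H`. -/
def IHkernel (d : ℕ) (ζ : ℝ → ℂ) (lam : ℕ) (x y : Ed d) : ℂ :=
  (1 / 2 : ℂ) * ∑' k : ℕ,
    invFT ζ (((lam : ℝ) - (2 * (k : ℝ) + d)) / 2) *
      (hermiteProjKernel d (2 * k + d) (Real.sqrt lam • x) (Real.sqrt lam • y) : ℂ)

/-- The operator `[ζ]_λ^H`. -/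
def IHop (d : ℕ) (ζ : ℝ → ℂ) (lam : ℕ) (f : Ed d → ℂ) : Ed d → ℂ :=
  fun x => ∫ y, IHkernel d ζ lam x y * f y

/-! ### Partial derivatives -/

/-- Partial derivative in the `i`-th coordinate of the first variable. -/
def pdx {n : ℕ} (i : Fin n) (f : Ed n → Ed n → ℝ) : Ed n → Ed n → ℝ :=
  fun x y => fderiv ℝ (fun x' => f x' y) x (EuclideanSpace.single i 1)

/-- Partial derivative in the `i`-th coordinate of the second variable. -/
def pdy {n : ℕ} (i : Fin n) (f : Ed n → Ed n → ℝ) : Ed n → Ed n → ℝ :=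
  fun x y => fderiv ℝ (f x) y (EuclideanSpace.single i 1)

/-- Partial derivative in the `i`-th coordinate. -/
def pd1 {n : ℕ} (i : Fin n) (f : Ed n → ℝ) : Ed n → ℝ :=
  fun x => fderiv ℝ f x (EuclideanSpace.single i 1)

/-- Multi-index partial derivative `∂_x^α` in the first variable. -/
def mpdx {n : ℕ} (α : Fin n → ℕ) (f : Ed n → Ed n → ℝ) : Ed n → Ed n → ℝ :=
  (List.finRange n).foldr (fun i g => (pdx i)^[α i] g) f

/-- Multi-index partial derivative `∂_y^β` in the second variable. -/
def mpdy {n : ℕ} (α : Fin n → ℕ) (f : Ed n → Ed n → ℝ) : Ed n → Ed n → ℝ :=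
  (List.finRange n).foldr (fun i g => (pdy i)^[α i] g) f

/-- Multi-index partial derivative `∂^α`. -/
def mpd1 {n : ℕ} (α : Fin n → ℕ) (f : Ed n → ℝ) : Ed n → ℝ :=
  (List.finRange n).foldr (fun i g => (pd1 i)^[α i] g) f

/-! ### The Hermite phase functions -/

/-- `S_c(x,y) ∈ [0,π)`, defined by `cos S_c = ⟨x,y⟩ + √𝒟(x,y)`. -/
def Scfun {n : ℕ} (x y : Ed n) : ℝ :=
  Real.arccos ((inner ℝ x y : ℝ) + Real.sqrt (Dfun x y))

/-- `a(x,y) = cos S_c(x,y) x − y`. -/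
def aH {n : ℕ} (x y : Ed n) : Ed n := Real.cos (Scfun x y) • x - y

/-- `b(x,y) = x − cos S_c(x,y) y`. -/
def bH {n : ℕ} (x y : Ed n) : Ed n := x - Real.cos (Scfun x y) • y

/-- The phase `𝒫_H(t,x,y)`. -/
def PH {n : ℕ} (t : ℝ) (x y : Ed n) : ℝ :=
  t / 2 + (‖x‖ ^ 2 + ‖y‖ ^ 2) * Real.cos t / (2 * Real.sin t) - (inner ℝ x y : ℝ) / Real.sin t

/-- `Φ_H(x,y) = 𝒫_H(S_c(x,y),x,y)`. -/
def PhiH {n : ℕ} (x y : Ed n) : ℝ := PH (Scfun x y) x y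

/-- The mixed Hessian `∂_y ∂_x^⊤ Φ_H(x,y)`. -/
def hessH {n : ℕ} (x y : Ed n) : Matrix (Fin n) (Fin n) ℝ :=
  fun i j => pdy j (pdx i PhiH) x y

/-- The matrix `M(x,y) = ∂_z ∂_z^⊤ ⟨∂_x Φ_H(x,z), a(x,y)/|a(x,y)|⟩ |_{z=y}`. -/
def MH {n : ℕ} (x y : Ed n) : Matrix (Fin n) (Fin n) ℝ :=
  fun i j => pd1 i (pd1 j (fun z => ∑ m, pdx m PhiH x z * ((‖aH x y‖⁻¹ • aH x y) m))) y

/-- Upper-left `(n−1)×(n−1)` submatrix of `M(x,y)`. -/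
def MtilH {n : ℕ} (x y : Ed n) : Matrix (Fin (n - 1)) (Fin (n - 1)) ℝ :=
  fun i j => MH x y (Fin.castLE (Nat.sub_le n 1) i) (Fin.castLE (Nat.sub_le n 1) j)


/-! ### Special Hermite -/

/-- Laguerre polynomial `L_k^{d-1}`. -/
def laguerrePoly (d k : ℕ) (x : ℝ) : ℝ :=
  ∑ j ∈ Finset.range (k + 1),
    (-1 : ℝ) ^ j * (Nat.choose (k + d - 1) (k - j) : ℝ) * x ^ j / (Nat.factorial j : ℝ)

/-- The Laguerre function `φ_k`. -/
def lagFun (d k : ℕ) (z : Ed (2 * d)) : ℝ :=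
  (2 * Real.pi) ^ (-(d : ℤ)) * laguerrePoly d k (‖z‖ ^ 2 / 2) * Real.exp (-‖z‖ ^ 2 / 4)

/-- The symplectic pairing `⟨z, Sw⟩` with `S = [[0,−I_d],[I_d,0]]`. -/
def symp (d : ℕ) (z w : Ed (2 * d)) : ℝ :=
  ∑ i : Fin d,
    (z ⟨d + i.1, by have := i.2; omega⟩ * w ⟨i.1, by have := i.2; omega⟩ -
     z ⟨i.1, by have := i.2; omega⟩ * w ⟨d + i.1, by have := i.2; omega⟩)

/-- Kernel of the special Hermite projection `Π_{2k+d}^L`. -/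
def shKernel (d k : ℕ) (z w : Ed (2 * d)) : ℂ :=
  (lagFun d k (z - w) : ℂ) * Complex.exp (-(Complex.I / 2) * ((symp d z w : ℝ) : ℂ))

/-- The special Hermite projection `Π_{2k+d}^L`. -/
def shProj (d k : ℕ) (f : Ed (2 * d) → ℂ) : Ed (2 * d) → ℂ :=
  fun z => ∫ w, shKernel d k z w * f w

/-- The special Hermite Bochner-Riesz mean `S_λ^δ(L)`. -/
def shBR (d : ℕ) (δ lam : ℝ) (f : Ed (2 * d) → ℂ) : Ed (2 * d) → ℂ :=
  fun z => ∑' k : ℕ,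
    (((max (1 - (2 * (k : ℝ) + d) / lam) 0) ^ δ : ℝ) : ℂ) * shProj d k f z

/-- Kernel of the rescaled operator `[ζ]_λ^L`. -/
def ILkernel (d : ℕ) (ζ : ℝ → ℂ) (lam : ℕ) (z z' : Ed (2 * d)) : ℂ :=
  ∑' k : ℕ, invFT ζ ((lam : ℝ) - (2 * (k : ℝ) + d)) *
    shKernel d k (Real.sqrt lam • z) (Real.sqrt lam • z')

/-- The operator `[ζ]_λ^L`. -/
def ILop (d : ℕ) (ζ : ℝ → ℂ) (lam : ℕ) (f : Ed (2 * d) → ℂ) : Ed (2 * d) → ℂ :=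
  fun z => ∫ w, ILkernel d ζ lam z w * f w

/-! ### Matrices and the special Hermite phase -/

/-- The matrix `S = [[0,−I_d],[I_d,0]]`. -/
def Smat (d : ℕ) : Matrix (Fin (2 * d)) (Fin (2 * d)) ℝ :=
  fun i j =>
    if i.1 < d ∧ j.1 = i.1 + d then -1
    else if d ≤ i.1 ∧ i.1 = j.1 + d then 1
    else 0

/-- The rotation matrix `L = 2^{-1/2}[[I_d,−I_d],[I_d,I_d]]`. -/
def Lmat (d : ℕ) : Matrix (Fin (2 * d)) (Fin (2 * d)) ℝ :=
  fun i j =>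
    (Real.sqrt 2)⁻¹ *
      (if i.1 < d then (if j = i then 1 else if j.1 = i.1 + d then -1 else 0)
       else (if j.1 + d = i.1 then 1 else if j = i then 1 else 0))

/-- The rotation `z ↦ Lz`. -/
def Lrot (d : ℕ) (z : Ed (2 * d)) : Ed (2 * d) :=
  (WithLp.equiv 2 (Fin (2 * d) → ℝ)).symm
    ((Lmat d).mulVec ((WithLp.equiv 2 (Fin (2 * d) → ℝ)) z))

/-- `𝔖_c(z,z') ∈ (0,π/2)`, defined by `sin 𝔖_c = |z−z'|/2`. -/
def SfrC {d : ℕ} (z z' : Ed (2 * d)) : ℝ := Real.arcsin (‖z - z'‖ / 2)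

/-- The phase `𝒫_L(t,z,z')`. -/
def PL (d : ℕ) (t : ℝ) (z z' : Ed (2 * d)) : ℝ :=
  t + ‖z - z'‖ ^ 2 * Real.cos t / (4 * Real.sin t) + symp d z z' / 2

/-- `Φ_L(z,z') = 𝒫_L(𝔖_c(z,z'),z,z')`. -/
def PhiL (d : ℕ) (z z' : Ed (2 * d)) : ℝ := PL d (SfrC z z') z z'

/-- The mixed Hessian `∂_{z'} ∂_z^⊤ Φ_L(z,z')`. -/
def hessL (d : ℕ) (z z' : Ed (2 * d)) : Matrix (Fin (2 * d)) (Fin (2 * d)) ℝ :=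
  fun i j => pdy j (pdx i (PhiL d)) z z'

/-- `v = z − z'` as a plain vector. -/
def vVec (d : ℕ) (z z' : Ed (2 * d)) : Fin (2 * d) → ℝ := fun i => z i - z' i

/-- The unit vector `ν(z,z') = R(z,z')(z−z')/|z−z'|`. -/
def nuVec (d : ℕ) (z z' : Ed (2 * d)) : Fin (2 * d) → ℝ :=
  fun i => Real.cos (SfrC z z') * (vVec d z z' i / ‖z - z'‖) -
    Real.sin (SfrC z z') * ((Smat d).mulVec (fun j => vVec d z z' j / ‖z - z'‖) i)

/-- The rotation matrix `R(z,z') = cos 𝔖_c I − sin 𝔖_c S`. -/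
def Rmat (d : ℕ) (z z' : Ed (2 * d)) : Matrix (Fin (2 * d)) (Fin (2 * d)) ℝ :=
  Real.cos (SfrC z z') • (1 : Matrix (Fin (2 * d)) (Fin (2 * d)) ℝ) -
    Real.sin (SfrC z z') • Smat d

/-- The matrix `M(z,z')` of Lemma on the second fundamental form. -/
def MmatL (d : ℕ) (z z' : Ed (2 * d)) : Matrix (Fin (2 * d)) (Fin (2 * d)) ℝ :=
  vecMulVec (vVec d z z') (vVec d z z') -
    (2 * Real.cos (SfrC z z') ^ 2) • vecMulVec (vVec d z z') (vVec d z z') +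
    (Real.cos (SfrC z z') ^ 2 * (vVec d z z' ⬝ᵥ vVec d z z')) •
      (1 : Matrix (Fin (2 * d)) (Fin (2 * d)) ℝ) +
    (Real.sin (SfrC z z') * Real.cos (SfrC z z')) •
      (vecMulVec (vVec d z z') (vVec d z z') * Smat d -
        Smat d * vecMulVec (vVec d z z') (vVec d z z'))

/-- `∂_w ∂_w^⊤ ⟨∂_z Φ_L(z,w), ν(z,z')⟩ |_{w = z'}`. -/
def hessWL (d : ℕ) (z z' : Ed (2 * d)) : Matrix (Fin (2 * d)) (Fin (2 * d)) ℝ :=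
  fun i j => pd1 i (pd1 j (fun w => ∑ m, pdx m (PhiL d) z w * nuVec d z z' m)) z'

namespace Lem24

variable {d : ℕ} {c₀ : ℝ}

def Uset (d : ℕ) (c₀ : ℝ) : Set (Ed d × Ed d) :=
  {p | ‖p.1‖ < 1 - c₀ / 2 ∧ ‖p.2‖ < 1 - c₀ / 2 ∧ c₀ ^ 2 / 2 < Dfun p.1 p.2}

def Uoff (d : ℕ) (c₀ : ℝ) : Set (Ed d × Ed d) := Uset d c₀ ∩ {p | p.1 ≠ p.2}

def cF {d : ℕ} (p : Ed d × Ed d) : ℝ := (inner ℝ p.1 p.2 : ℝ) + Real.sqrt (Dfun p.1 p.2)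

def wF {d : ℕ} (p : Ed d × Ed d) : ℝ := 1 - (inner ℝ p.1 p.2 : ℝ) + Real.sqrt (Dfun p.1 p.2)

lemma contDiff_DfunP : ContDiff ℝ (⊤ : ℕ∞) (fun p : Ed d × Ed d => Dfun p.1 p.2) := by
  simp only [Dfun]
  exact ((contDiff_const.add ((contDiff_inner (𝕜 := ℝ)).pow 2)).sub
    ((contDiff_norm_sq ℝ).comp contDiff_fst)).sub ((contDiff_norm_sq ℝ).comp contDiff_snd)

lemma isOpen_Uset : IsOpen (Uset d c₀) := by
  have h1 : IsOpen {p : Ed d × Ed d | ‖p.1‖ < 1 - c₀ / 2} :=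
    isOpen_lt continuous_fst.norm continuous_const
  have h2 : IsOpen {p : Ed d × Ed d | ‖p.2‖ < 1 - c₀ / 2} :=
    isOpen_lt continuous_snd.norm continuous_const
  have h3 : IsOpen {p : Ed d × Ed d | c₀ ^ 2 / 2 < Dfun p.1 p.2} :=
    isOpen_lt continuous_const contDiff_DfunP.continuous
  have : Uset d c₀ = ({p : Ed d × Ed d | ‖p.1‖ < 1 - c₀ / 2} ∩
      ({p : Ed d × Ed d | ‖p.2‖ < 1 - c₀ / 2} ∩ {p : Ed d × Ed d | c₀ ^ 2 / 2 < Dfun p.1 p.2})) := by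
    ext p; simp [Uset, Set.mem_setOf_eq, and_assoc]
  rw [this]; exact h1.inter (h2.inter h3)

lemma isOpen_Uoff : IsOpen (Uoff d c₀) := by
  have : IsOpen {p : Ed d × Ed d | p.1 ≠ p.2} := by
    have h := (isClosed_diagonal (X := Ed d)).isOpen_compl
    have he : {p : Ed d × Ed d | p.1 ≠ p.2} = (Set.diagonal (Ed d))ᶜ := by
      ext p; simp [Set.diagonal, eq_comm]
    rw [he]; exact h
  exact isOpen_Uset.inter this

section Facts

variable (hc₀ : 0 < c₀) (hc₁ : c₀ < 1) {x y : Ed d}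

include hc₀ in
lemma Dpos (hp : (x, y) ∈ Uset d c₀) : 0 < Dfun x y :=
  lt_of_le_of_lt (by positivity) hp.2.2

include hc₀ in
lemma normx_lt (hp : (x, y) ∈ Uset d c₀) : ‖x‖ < 1 := by
  have := hp.1; dsimp at this; linarith

include hc₀ in
lemma normy_lt (hp : (x, y) ∈ Uset d c₀) : ‖y‖ < 1 := by
  have := hp.2.1; dsimp at this; linarith

include hc₀ in
lemma inner_abs_lt (hp : (x, y) ∈ Uset d c₀) : |(inner ℝ x y : ℝ)| < 1 := by
  have h1 := normx_lt hc₀ hp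
  have h2 := normy_lt hc₀ hp
  have h3 := abs_real_inner_le_norm x y
  nlinarith [norm_nonneg x, norm_nonneg y]

include hc₀ in
lemma wF_pos (hp : (x, y) ∈ Uset d c₀) : 0 < wF (x, y) := by
  have h := inner_abs_lt hc₀ hp
  have h2 := Real.sqrt_nonneg (Dfun x y)
  have := abs_lt.1 h
  simp only [wF]; linarith

include hc₀ in
lemma one_add_cF_pos (hp : (x, y) ∈ Uset d c₀) : 0 < 1 + cF (x, y) := by
  have h := inner_abs_lt hc₀ hp
  have h2 := Real.sqrt_nonneg (Dfun x y)
  have := abs_lt.1 h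
  simp only [cF]; linarith

lemma Dfun_eq_sub (x y : Ed d) : Dfun x y = (1 - (inner ℝ x y : ℝ)) ^ 2 - ‖x - y‖ ^ 2 := by
  rw [Dfun, norm_sub_sq_real]; ring

include hc₀ in
lemma one_sub_cF (hp : (x, y) ∈ Uset d c₀) : 1 - cF (x, y) = ‖x - y‖ ^ 2 / wF (x, y) := by
  have hw := wF_pos hc₀ hp
  have hD := Dpos hc₀ hp
  have hs : Real.sqrt (Dfun x y) ^ 2 = Dfun x y := Real.sq_sqrt hD.le
  rw [eq_div_iff hw.ne']
  have hkey : (1 - cF (x, y)) * wF (x, y)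
      = (1 - (inner ℝ x y : ℝ)) ^ 2 - Real.sqrt (Dfun x y) ^ 2 := by
    simp only [cF, wF]; ring
  rw [hkey, hs, Dfun_eq_sub]; ring

include hc₀ in
lemma cF_le_one (hp : (x, y) ∈ Uset d c₀) : cF (x, y) ≤ 1 := by
  have := one_sub_cF hc₀ hp
  have hw := wF_pos hc₀ hp
  nlinarith [sq_nonneg ‖x - y‖, div_nonneg (sq_nonneg ‖x - y‖) hw.le]

include hc₀ in
lemma cF_lt_one (hp : (x, y) ∈ Uset d c₀) (hxy : x ≠ y) : cF (x, y) < 1 := by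
  have h1 := one_sub_cF hc₀ hp
  have hw := wF_pos hc₀ hp
  have hv : 0 < ‖x - y‖ := by
    rw [norm_pos_iff]; exact sub_ne_zero.2 hxy
  nlinarith [div_pos (by positivity : (0:ℝ) < ‖x - y‖ ^ 2) hw]

include hc₀ in
lemma neg_one_lt_cF (hp : (x, y) ∈ Uset d c₀) : -1 < cF (x, y) := by
  have := one_add_cF_pos hc₀ hp; linarith

include hc₀ in
lemma one_sub_cF_sq (hp : (x, y) ∈ Uset d c₀) :
    1 - cF (x, y) ^ 2 = ‖x - y‖ ^ 2 * (1 + cF (x, y)) / wF (x, y) := by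
  have h1 := one_sub_cF hc₀ hp
  have hw := wF_pos hc₀ hp
  have : 1 - cF (x, y) ^ 2 = (1 - cF (x, y)) * (1 + cF (x, y)) := by ring
  rw [this, h1]; field_simp

include hc₀ in
lemma sqrt_one_sub_cF_sq (hp : (x, y) ∈ Uset d c₀) :
    Real.sqrt (1 - cF (x, y) ^ 2)
      = ‖x - y‖ * Real.sqrt ((1 + cF (x, y)) / wF (x, y)) := by
  rw [one_sub_cF_sq hc₀ hp, mul_div_assoc,
    Real.sqrt_mul (sq_nonneg ‖x - y‖), Real.sqrt_sq (norm_nonneg _)]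

include hc₀ in
lemma inv_sqrt_one_sub_cF_sq (hp : (x, y) ∈ Uset d c₀) :
    (Real.sqrt (1 - cF (x, y) ^ 2))⁻¹
      = ‖x - y‖⁻¹ * Real.sqrt (wF (x, y) / (1 + cF (x, y))) := by
  rw [sqrt_one_sub_cF_sq hc₀ hp, mul_inv, ← Real.sqrt_inv, inv_div]

end Facts

/-! ### Smoothness helpers -/

lemma contDiffOn_sqrt_comp {A : Ed d × Ed d → ℝ}
    (hA : ContDiffOn ℝ (⊤ : ℕ∞) A (Uset d c₀))
    (hpos : ∀ p ∈ Uset d c₀, 0 < A p) :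
    ContDiffOn ℝ (⊤ : ℕ∞) (fun p => Real.sqrt (A p)) (Uset d c₀) := fun p hp =>
  ((Real.contDiffAt_sqrt (hpos p hp).ne').comp p
    (hA.contDiffAt (isOpen_Uset.mem_nhds hp))).contDiffWithinAt

lemma contDiffOn_DfunP : ContDiffOn ℝ (⊤ : ℕ∞) (fun p : Ed d × Ed d => Dfun p.1 p.2) (Uset d c₀) :=
  contDiff_DfunP.contDiffOn

lemma contDiffOn_sqrtD (hc₀ : 0 < c₀) :
    ContDiffOn ℝ (⊤ : ℕ∞) (fun p : Ed d × Ed d => Real.sqrt (Dfun p.1 p.2)) (Uset d c₀) :=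
  contDiffOn_sqrt_comp contDiffOn_DfunP (fun p hp => Dpos hc₀ (by exact hp))

lemma contDiffOn_innerP :
    ContDiffOn ℝ (⊤ : ℕ∞) (fun p : Ed d × Ed d => (inner ℝ p.1 p.2 : ℝ)) (Uset d c₀) :=
  (contDiff_inner (𝕜 := ℝ)).contDiffOn

lemma contDiffOn_cF (hc₀ : 0 < c₀) : ContDiffOn ℝ (⊤ : ℕ∞) (cF (d := d)) (Uset d c₀) :=
  contDiffOn_innerP.add (contDiffOn_sqrtD hc₀)

lemma contDiffOn_wF (hc₀ : 0 < c₀) : ContDiffOn ℝ (⊤ : ℕ∞) (wF (d := d)) (Uset d c₀) :=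
  ((contDiffOn_const.sub contDiffOn_innerP).add (contDiffOn_sqrtD hc₀))

lemma contDiffOn_coord1 (i : Fin d) :
    ContDiffOn ℝ (⊤ : ℕ∞) (fun p : Ed d × Ed d => p.1 i) (Uset d c₀) := by
  have h : (fun p : Ed d × Ed d => p.1 i)
      = ⇑(EuclideanSpace.proj (𝕜 := ℝ) i) ∘ Prod.fst := rfl
  rw [h]
  exact (((EuclideanSpace.proj (𝕜 := ℝ) i).contDiff).comp contDiff_fst).contDiffOn

lemma contDiffOn_coord2 (i : Fin d) :
    ContDiffOn ℝ (⊤ : ℕ∞) (fun p : Ed d × Ed d => p.2 i) (Uset d c₀) := by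
  have h : (fun p : Ed d × Ed d => p.2 i)
      = ⇑(EuclideanSpace.proj (𝕜 := ℝ) i) ∘ Prod.snd := rfl
  rw [h]
  exact (((EuclideanSpace.proj (𝕜 := ℝ) i).contDiff).comp contDiff_snd).contDiffOn

/-! ### The symbol class -/

inductive Sym (d : ℕ) (c₀ : ℝ) : ℤ → (Ed d → Ed d → ℝ) → Prop
  | smooth {A : Ed d × Ed d → ℝ} (hA : ContDiffOn ℝ (⊤ : ℕ∞) A (Uset d c₀)) :
      Sym d c₀ 0 (fun x y => A (x, y))
  | coord (i : Fin d) : Sym d c₀ 1 (fun x y => x i - y i)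
  | invNorm : Sym d c₀ (-1) (fun x y => ‖x - y‖⁻¹)
  | zero (e : ℤ) : Sym d c₀ e (fun _ _ => 0)
  | add {e : ℤ} {f g : Ed d → Ed d → ℝ} :
      Sym d c₀ e f → Sym d c₀ e g → Sym d c₀ e (fun x y => f x y + g x y)
  | mul {e₁ e₂ : ℤ} {f g : Ed d → Ed d → ℝ} :
      Sym d c₀ e₁ f → Sym d c₀ e₂ g → Sym d c₀ (e₁ + e₂) (fun x y => f x y * g x y)
  | mono {e e' : ℤ} {f : Ed d → Ed d → ℝ} : Sym d c₀ e f → e' ≤ e → Sym d c₀ e' f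
  | congr {e : ℤ} {f g : Ed d → Ed d → ℝ} :
      Sym d c₀ e f → (∀ p ∈ Uoff d c₀, f p.1 p.2 = g p.1 p.2) → Sym d c₀ e g

lemma Sym.of_eq {e e' : ℤ} {f : Ed d → Ed d → ℝ} (h : Sym d c₀ e f) (he : e = e') :
    Sym d c₀ e' f := he ▸ h

lemma Sym.of_eqf {e : ℤ} {f g : Ed d → Ed d → ℝ} (h : Sym d c₀ e f)
    (he : ∀ x y, f x y = g x y) : Sym d c₀ e g := by
  have : f = g := funext fun x => funext fun y => he x y
  exact this ▸ h

lemma Sym.neg {e : ℤ} {f : Ed d → Ed d → ℝ} (h : Sym d c₀ e f) :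
    Sym d c₀ e (fun x y => -f x y) :=
  (((Sym.smooth (A := fun _ => (-1 : ℝ)) contDiffOn_const).mul h).of_eq (by ring)).of_eqf
    (fun x y => by ring)

lemma Sym.fsum {ι : Type*} {e : ℤ} {s : Finset ι} {F : ι → Ed d → Ed d → ℝ}
    (h : ∀ j ∈ s, Sym d c₀ e (F j)) :
    Sym d c₀ e (fun x y => ∑ j ∈ s, F j x y) := by
  classical
  induction s using Finset.induction_on with
  | empty => exact (Sym.zero e).of_eqf (by simp)
  | insert a s' hnotmem ih =>
      exact ((h a (Finset.mem_insert_self a s')).add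
        (ih fun j hj => h j (Finset.mem_insert_of_mem hj))).of_eqf
        (fun x y => by rw [Finset.sum_insert hnotmem])

/-! ### The compact set and bounds -/

def Kset (d : ℕ) (c₀ : ℝ) : Set (Ed d × Ed d) :=
  {p | ‖p.1‖ ≤ 1 - c₀ ∧ ‖p.2‖ ≤ 1 - c₀ ∧ c₀ ^ 2 ≤ Dfun p.1 p.2}

lemma frakD_subset_Kset : frakD d c₀ ⊆ Kset d c₀ :=
  fun p hp => ⟨hp.1, hp.2.1, hp.2.2.le⟩

lemma Kset_subset_Uset (hc₀ : 0 < c₀) (hc₁ : c₀ < 1) : Kset d c₀ ⊆ Uset d c₀ := by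
  intro p hp
  refine ⟨lt_of_le_of_lt hp.1 (by linarith), lt_of_le_of_lt hp.2.1 (by linarith), ?_⟩
  have := hp.2.2
  nlinarith [sq_nonneg c₀]

lemma frakD_subset_Uset (hc₀ : 0 < c₀) (hc₁ : c₀ < 1) : frakD d c₀ ⊆ Uset d c₀ :=
  fun p hp => Kset_subset_Uset hc₀ hc₁ (frakD_subset_Kset hp)

lemma isCompact_Kset (hc₀ : 0 < c₀) : IsCompact (Kset d c₀) := by
  apply Metric.isCompact_of_isClosed_isBounded
  · have h1 : IsClosed {p : Ed d × Ed d | ‖p.1‖ ≤ 1 - c₀} :=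
      isClosed_le continuous_fst.norm continuous_const
    have h2 : IsClosed {p : Ed d × Ed d | ‖p.2‖ ≤ 1 - c₀} :=
      isClosed_le continuous_snd.norm continuous_const
    have h3 : IsClosed {p : Ed d × Ed d | c₀ ^ 2 ≤ Dfun p.1 p.2} :=
      isClosed_le continuous_const contDiff_DfunP.continuous
    have : Kset d c₀ = ({p : Ed d × Ed d | ‖p.1‖ ≤ 1 - c₀} ∩
        ({p : Ed d × Ed d | ‖p.2‖ ≤ 1 - c₀} ∩ {p : Ed d × Ed d | c₀ ^ 2 ≤ Dfun p.1 p.2})) := by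
      ext p; simp [Kset, Set.mem_setOf_eq, and_assoc]
    rw [this]; exact h1.inter (h2.inter h3)
  · apply Bornology.IsBounded.subset
      ((Metric.isBounded_closedBall (x := (0 : Ed d)) (r := 1)).prod
        (Metric.isBounded_closedBall (x := (0 : Ed d)) (r := 1)))
    intro p hp
    constructor
    · simp only [Metric.mem_closedBall, dist_zero_right]; linarith [hp.1]
    · simp only [Metric.mem_closedBall, dist_zero_right]; linarith [hp.2.1]

lemma abs_coord_le (u : Ed d) (i : Fin d) : |u i| ≤ ‖u‖ := by
  have h := abs_real_inner_le_norm (EuclideanSpace.single i (1 : ℝ)) u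
  simpa [EuclideanSpace.inner_single_left, EuclideanSpace.norm_single] using h

lemma norm_sub_le_two (hmem : (x, y) ∈ frakD d c₀) (hc₀ : 0 < c₀) : ‖x - y‖ ≤ 2 := by
  have h1 : ‖x‖ ≤ 1 - c₀ := hmem.1
  have h2 : ‖y‖ ≤ 1 - c₀ := hmem.2.1
  calc ‖x - y‖ ≤ ‖x‖ + ‖y‖ := norm_sub_le x y
    _ ≤ 2 := by linarith

theorem Sym.bound (hc₀ : 0 < c₀) (hc₁ : c₀ < 1) {e : ℤ} {f : Ed d → Ed d → ℝ}
    (h : Sym d c₀ e f) :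
    ∃ C : ℝ, 0 ≤ C ∧ ∀ x y : Ed d, (x, y) ∈ frakD d c₀ → x ≠ y →
      |f x y| ≤ C * ‖x - y‖ ^ e := by
  induction h with
  | @smooth A hA =>
      obtain ⟨C, hC⟩ := (isCompact_Kset hc₀).exists_bound_of_continuousOn
        (hA.continuousOn.mono (Kset_subset_Uset hc₀ hc₁))
      refine ⟨max C 0, le_max_right _ _, fun x y hmem hxy => ?_⟩
      have := hC (x, y) (frakD_subset_Kset hmem)
      rw [Real.norm_eq_abs] at this
      simp only [zpow_zero, mul_one]
      exact le_trans this (le_max_left _ _)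
  | coord i =>
      refine ⟨1, zero_le_one, fun x y hmem hxy => ?_⟩
      show |x i - y i| ≤ 1 * ‖x - y‖ ^ (1 : ℤ)
      have h : x i - y i = (x - y) i := by simp
      rw [h, one_mul, zpow_one]
      exact abs_coord_le (x - y) i
  | invNorm =>
      refine ⟨1, zero_le_one, fun x y hmem hxy => ?_⟩
      show |‖x - y‖⁻¹| ≤ 1 * ‖x - y‖ ^ (-1 : ℤ)
      rw [one_mul, _root_.zpow_neg_one, abs_of_nonneg (by positivity)]
  | zero e =>
      exact ⟨0, le_rfl, fun x y hmem hxy => by simp⟩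
  | @add e' f' g' hf hg ihf ihg =>
      obtain ⟨C₁, hC₁0, hC₁⟩ := ihf
      obtain ⟨C₂, hC₂0, hC₂⟩ := ihg
      refine ⟨C₁ + C₂, by linarith, fun x y hmem hxy => ?_⟩
      show |f' x y + g' x y| ≤ (C₁ + C₂) * ‖x - y‖ ^ e'
      calc |f' x y + g' x y| ≤ |f' x y| + |g' x y| := abs_add_le _ _
        _ ≤ C₁ * ‖x - y‖ ^ e' + C₂ * ‖x - y‖ ^ e' :=
            add_le_add (hC₁ x y hmem hxy) (hC₂ x y hmem hxy)
        _ = (C₁ + C₂) * ‖x - y‖ ^ e' := by ring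
  | @mul e₁ e₂ f' g' hf hg ihf ihg =>
      obtain ⟨C₁, hC₁0, hC₁⟩ := ihf
      obtain ⟨C₂, hC₂0, hC₂⟩ := ihg
      refine ⟨C₁ * C₂, mul_nonneg hC₁0 hC₂0, fun x y hmem hxy => ?_⟩
      have hne : ‖x - y‖ ≠ 0 := by
        simp [sub_eq_zero, hxy]
      show |f' x y * g' x y| ≤ C₁ * C₂ * ‖x - y‖ ^ (e₁ + e₂)
      rw [abs_mul, zpow_add₀ hne]
      calc |f' x y| * |g' x y| ≤ (C₁ * ‖x - y‖ ^ e₁) * (C₂ * ‖x - y‖ ^ e₂) :=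
            mul_le_mul (hC₁ x y hmem hxy) (hC₂ x y hmem hxy) (abs_nonneg _)
              (by positivity)
        _ = C₁ * C₂ * (‖x - y‖ ^ e₁ * ‖x - y‖ ^ e₂) := by ring
  | @mono e e' f' hf hle ih =>
      obtain ⟨C, hC0, hC⟩ := ih
      obtain ⟨k, hk⟩ : ∃ k : ℕ, e = (k : ℤ) + e' := ⟨(e - e').toNat, by omega⟩
      refine ⟨C * 2 ^ k, by positivity, fun x y hmem hxy => ?_⟩
      have hne : ‖x - y‖ ≠ 0 := by simp [sub_eq_zero, hxy]
      have h2 : ‖x - y‖ ≤ 2 := norm_sub_le_two hmem hc₀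
      have key : ‖x - y‖ ^ e ≤ 2 ^ k * ‖x - y‖ ^ e' := by
        rw [hk, zpow_add₀ hne, zpow_natCast]
        gcongr
      calc |f' x y| ≤ C * ‖x - y‖ ^ e := hC x y hmem hxy
        _ ≤ C * (2 ^ k * ‖x - y‖ ^ e') := mul_le_mul_of_nonneg_left key hC0
        _ = C * 2 ^ k * ‖x - y‖ ^ e' := by ring
  | @congr e f' g' hf heq ih =>
      obtain ⟨C, hC0, hC⟩ := ih
      refine ⟨C, hC0, fun x y hmem hxy => ?_⟩
      rw [← heq (x, y) ⟨frakD_subset_Uset hc₀ hc₁ hmem, hxy⟩]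
      exact hC x y hmem hxy

/-! ### Derivative closure -/

lemma sectionX_nhds {x y : Ed d} (hp : (x, y) ∈ Uoff d c₀) :
    {x' : Ed d | (x', y) ∈ Uoff d c₀} ∈ 𝓝 x := by
  have hc : Continuous (fun x' : Ed d => (x', y)) := continuous_id.prodMk continuous_const
  exact (isOpen_Uoff.preimage hc).mem_nhds hp

lemma sectionY_nhds {x y : Ed d} (hp : (x, y) ∈ Uoff d c₀) :
    {y' : Ed d | (x, y') ∈ Uoff d c₀} ∈ 𝓝 y := by
  have hc : Continuous (fun y' : Ed d => (x, y')) := continuous_const.prodMk continuous_id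
  exact (isOpen_Uoff.preimage hc).mem_nhds hp

lemma smooth_sectionX {A : Ed d × Ed d → ℝ} (hA : ContDiffOn ℝ (⊤ : ℕ∞) A (Uset d c₀))
    {x y : Ed d} (hp : (x, y) ∈ Uset d c₀) :
    HasFDerivAt (fun x' => A (x', y))
      ((fderiv ℝ A (x, y)).comp ((ContinuousLinearMap.id ℝ (Ed d)).prod 0)) x := by
  have hdA : DifferentiableAt ℝ A (x, y) :=
    (hA.contDiffAt (isOpen_Uset.mem_nhds hp)).differentiableAt (by simp)
  exact hdA.hasFDerivAt.comp x ((hasFDerivAt_id x).prodMk (hasFDerivAt_const y x))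

lemma smooth_sectionY {A : Ed d × Ed d → ℝ} (hA : ContDiffOn ℝ (⊤ : ℕ∞) A (Uset d c₀))
    {x y : Ed d} (hp : (x, y) ∈ Uset d c₀) :
    HasFDerivAt (fun y' => A (x, y'))
      ((fderiv ℝ A (x, y)).comp ((0 : Ed d →L[ℝ] Ed d).prod (ContinuousLinearMap.id ℝ (Ed d)))) y := by
  have hdA : DifferentiableAt ℝ A (x, y) :=
    (hA.contDiffAt (isOpen_Uset.mem_nhds hp)).differentiableAt (by simp)
  exact hdA.hasFDerivAt.comp y ((hasFDerivAt_const x y).prodMk (hasFDerivAt_id y))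

lemma hasFDerivAt_coordX (i : Fin d) (x y : Ed d) :
    HasFDerivAt (fun x' : Ed d => x' i - y i)
      ((EuclideanSpace.proj (𝕜 := ℝ) i : Ed d →L[ℝ] ℝ)) x := by
  have h : HasFDerivAt (fun u : Ed d => u i) (EuclideanSpace.proj (𝕜 := ℝ) i) x :=
    (EuclideanSpace.proj (𝕜 := ℝ) i).hasFDerivAt
  exact h.sub_const (y i)

lemma hasFDerivAt_coordY (i : Fin d) (x y : Ed d) :
    HasFDerivAt (fun y' : Ed d => x i - y' i)
      (-(EuclideanSpace.proj (𝕜 := ℝ) i : Ed d →L[ℝ] ℝ)) y := by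
  have h : HasFDerivAt (fun u : Ed d => u i) (EuclideanSpace.proj (𝕜 := ℝ) i) y :=
    (EuclideanSpace.proj (𝕜 := ℝ) i).hasFDerivAt
  exact h.const_sub (x i)

lemma norm_eq_sqrt_inner' (u : Ed d) : ‖u‖ = Real.sqrt (inner ℝ u u : ℝ) := by
  rw [real_inner_self_eq_norm_sq, Real.sqrt_sq (norm_nonneg u)]

lemma hasFDerivAt_invNormX {x y : Ed d} (hxy : x ≠ y) :
    ∃ L : Ed d →L[ℝ] ℝ, HasFDerivAt (fun x' => ‖x' - y‖⁻¹) L x ∧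
      ∀ i, L (EuclideanSpace.single i 1)
        = -((x i - y i) * (‖x - y‖⁻¹ * (‖x - y‖⁻¹ * ‖x - y‖⁻¹))) := by
  have hv : x - y ≠ 0 := sub_ne_zero.2 hxy
  have hq0 : (0 : ℝ) < (inner ℝ (x - y) (x - y) : ℝ) := by
    rw [real_inner_self_eq_norm_sq]
    have : 0 < ‖x - y‖ := norm_pos_iff.2 hv
    positivity
  have hsub : HasFDerivAt (fun x' : Ed d => x' - y) (ContinuousLinearMap.id ℝ (Ed d)) x :=
    (hasFDerivAt_id x).sub_const y
  have hq : HasFDerivAt (fun x' : Ed d => (inner ℝ (x' - y) (x' - y) : ℝ))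
      ((fderivInnerCLM ℝ (x - y, x - y)).comp
        ((ContinuousLinearMap.id ℝ (Ed d)).prod (ContinuousLinearMap.id ℝ (Ed d)))) x :=
    hsub.inner ℝ hsub
  have hsq : HasFDerivAt (fun x' : Ed d => Real.sqrt ((inner ℝ (x' - y) (x' - y) : ℝ)))
      ((1 / (2 * Real.sqrt ((inner ℝ (x - y) (x - y) : ℝ)))) • _) x :=
    (Real.hasDerivAt_sqrt hq0.ne').comp_hasFDerivAt x hq
  have hs0 : Real.sqrt ((inner ℝ (x - y) (x - y) : ℝ)) ≠ 0 := by
    rw [← norm_eq_sqrt_inner']; exact norm_ne_zero_iff.2 hv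
  have hF := (hasDerivAt_inv hs0).comp_hasFDerivAt x hsq
  refine ⟨(-(Real.sqrt ((inner ℝ (x - y) (x - y) : ℝ)) ^ 2)⁻¹) • ((1 / (2 * Real.sqrt ((inner ℝ (x - y) (x - y) : ℝ)))) • ((fderivInnerCLM ℝ (x - y, x - y)).comp ((ContinuousLinearMap.id ℝ (Ed d)).prod (ContinuousLinearMap.id ℝ (Ed d))))), ?_, ?_⟩
  · have hfun : (fun x' : Ed d => ‖x' - y‖⁻¹)
        = fun x' : Ed d => (Real.sqrt ((inner ℝ (x' - y) (x' - y) : ℝ)))⁻¹ :=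
      funext fun x' => by rw [norm_eq_sqrt_inner']
    rw [hfun]
    exact hF
  · intro i
    have hval : (fderivInnerCLM ℝ (x - y, x - y)).comp
        ((ContinuousLinearMap.id ℝ (Ed d)).prod (ContinuousLinearMap.id ℝ (Ed d)))
        (EuclideanSpace.single i 1) = 2 * (x i - y i) := by
      simp only [ContinuousLinearMap.coe_comp', Function.comp_apply,
        ContinuousLinearMap.prod_apply, ContinuousLinearMap.id_apply, fderivInnerCLM_apply]
      have hcoord : (inner ℝ (x - y) (EuclideanSpace.single i (1:ℝ)) : ℝ) = x i - y i := by
        rw [EuclideanSpace.inner_single_right]; simp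
      have hcoord' : (inner ℝ (EuclideanSpace.single i (1:ℝ)) (x - y) : ℝ) = x i - y i := by
        rw [EuclideanSpace.inner_single_left]; simp
      rw [hcoord, hcoord']; ring
    simp only [ContinuousLinearMap.smul_apply, smul_eq_mul]
    rw [hval, ← norm_eq_sqrt_inner']
    have hn : ‖x - y‖ ≠ 0 := norm_ne_zero_iff.2 hv
    field_simp

lemma hasFDerivAt_invNormY {x y : Ed d} (hxy : x ≠ y) :
    ∃ L : Ed d →L[ℝ] ℝ, HasFDerivAt (fun y' => ‖x - y'‖⁻¹) L y ∧
      ∀ i, L (EuclideanSpace.single i 1)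
        = (x i - y i) * (‖x - y‖⁻¹ * (‖x - y‖⁻¹ * ‖x - y‖⁻¹)) := by
  have hv : x - y ≠ 0 := sub_ne_zero.2 hxy
  have hq0 : (0 : ℝ) < (inner ℝ (x - y) (x - y) : ℝ) := by
    rw [real_inner_self_eq_norm_sq]
    have : 0 < ‖x - y‖ := norm_pos_iff.2 hv
    positivity
  have hsub : HasFDerivAt (fun y' : Ed d => x - y') (-(ContinuousLinearMap.id ℝ (Ed d))) y := by
    have h : HasFDerivAt (fun y' : Ed d => x - y')
        ((0 : Ed d →L[ℝ] Ed d) - ContinuousLinearMap.id ℝ (Ed d)) y :=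
      (hasFDerivAt_const x y).sub (hasFDerivAt_id y)
    rw [zero_sub] at h
    exact h
  have hq : HasFDerivAt (fun y' : Ed d => (inner ℝ (x - y') (x - y') : ℝ))
      ((fderivInnerCLM ℝ (x - y, x - y)).comp
        ((-(ContinuousLinearMap.id ℝ (Ed d))).prod (-(ContinuousLinearMap.id ℝ (Ed d))))) y :=
    hsub.inner ℝ hsub
  have hsq : HasFDerivAt (fun y' : Ed d => Real.sqrt ((inner ℝ (x - y') (x - y') : ℝ)))
      ((1 / (2 * Real.sqrt ((inner ℝ (x - y) (x - y) : ℝ)))) • ((fderivInnerCLM ℝ (x - y, x - y)).comp ((-(ContinuousLinearMap.id ℝ (Ed d))).prod (-(ContinuousLinearMap.id ℝ (Ed d)))))) y :=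
    (Real.hasDerivAt_sqrt hq0.ne').comp_hasFDerivAt y hq
  have hs0 : Real.sqrt ((inner ℝ (x - y) (x - y) : ℝ)) ≠ 0 := by
    rw [← norm_eq_sqrt_inner']; exact norm_ne_zero_iff.2 hv
  have hF := (hasDerivAt_inv hs0).comp_hasFDerivAt y hsq
  refine ⟨(-(Real.sqrt ((inner ℝ (x - y) (x - y) : ℝ)) ^ 2)⁻¹) • ((1 / (2 * Real.sqrt ((inner ℝ (x - y) (x - y) : ℝ)))) • ((fderivInnerCLM ℝ (x - y, x - y)).comp ((-(ContinuousLinearMap.id ℝ (Ed d))).prod (-(ContinuousLinearMap.id ℝ (Ed d)))))), ?_, ?_⟩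
  · have hfun : (fun y' : Ed d => ‖x - y'‖⁻¹)
        = fun y' : Ed d => (Real.sqrt ((inner ℝ (x - y') (x - y') : ℝ)))⁻¹ :=
      funext fun y' => by rw [norm_eq_sqrt_inner']
    rw [hfun]
    exact hF
  · intro i
    have hval : (fderivInnerCLM ℝ (x - y, x - y)).comp
        ((-(ContinuousLinearMap.id ℝ (Ed d))).prod (-(ContinuousLinearMap.id ℝ (Ed d))))
        (EuclideanSpace.single i 1) = -(2 * (x i - y i)) := by
      simp only [ContinuousLinearMap.coe_comp', Function.comp_apply,
        ContinuousLinearMap.prod_apply, ContinuousLinearMap.neg_apply,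
        ContinuousLinearMap.id_apply, fderivInnerCLM_apply, inner_neg_right, inner_neg_left]
      have hcoord : (inner ℝ (x - y) (EuclideanSpace.single i (1:ℝ)) : ℝ) = x i - y i := by
        rw [EuclideanSpace.inner_single_right]; simp
      have hcoord' : (inner ℝ (EuclideanSpace.single i (1:ℝ)) (x - y) : ℝ) = x i - y i := by
        rw [EuclideanSpace.inner_single_left]; simp
      rw [hcoord, hcoord']; ring
    simp only [ContinuousLinearMap.smul_apply, smul_eq_mul]
    rw [hval, ← norm_eq_sqrt_inner']
    have hn : ‖x - y‖ ≠ 0 := norm_ne_zero_iff.2 hv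
    field_simp

theorem Sym.deriv (hc₀ : 0 < c₀) {e : ℤ} {f : Ed d → Ed d → ℝ} (h : Sym d c₀ e f) :
    (∀ p ∈ Uoff d c₀, DifferentiableAt ℝ (fun x' => f x' p.2) p.1) ∧
    (∀ p ∈ Uoff d c₀, DifferentiableAt ℝ (fun y' => f p.1 y') p.2) ∧
    (∀ i, Sym d c₀ (e - 1) (pdx i f)) ∧ (∀ i, Sym d c₀ (e - 1) (pdy i f)) := by
  induction h with
  | @smooth A hA =>
      refine ⟨fun p hp => (smooth_sectionX hA hp.1).differentiableAt,
        fun p hp => (smooth_sectionY hA hp.1).differentiableAt, fun i => ?_, fun i => ?_⟩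
      · have hsm : ContDiffOn ℝ (⊤ : ℕ∞)
            (fun p : Ed d × Ed d => fderiv ℝ A p (EuclideanSpace.single i 1, 0)) (Uset d c₀) :=
          (((contDiffOn_infty_iff_fderiv_of_isOpen isOpen_Uset).1 hA).2).clm_apply contDiffOn_const
        refine ((Sym.smooth hsm).mono (by norm_num)).congr ?_
        rintro ⟨x, y⟩ hp
        show fderiv ℝ A (x, y) (EuclideanSpace.single i 1, 0)
          = fderiv ℝ (fun x' => A (x', y)) x (EuclideanSpace.single i 1)
        rw [(smooth_sectionX hA hp.1).fderiv]
        simp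
      · have hsm : ContDiffOn ℝ (⊤ : ℕ∞)
            (fun p : Ed d × Ed d => fderiv ℝ A p (0, EuclideanSpace.single i 1)) (Uset d c₀) :=
          (((contDiffOn_infty_iff_fderiv_of_isOpen isOpen_Uset).1 hA).2).clm_apply contDiffOn_const
        refine ((Sym.smooth hsm).mono (by norm_num)).congr ?_
        rintro ⟨x, y⟩ hp
        show fderiv ℝ A (x, y) (0, EuclideanSpace.single i 1)
          = fderiv ℝ (fun y' => A (x, y')) y (EuclideanSpace.single i 1)
        rw [(smooth_sectionY hA hp.1).fderiv]
        simp
  | coord j =>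
      refine ⟨fun p hp => (hasFDerivAt_coordX j p.1 p.2).differentiableAt,
        fun p hp => (hasFDerivAt_coordY j p.1 p.2).differentiableAt, fun i => ?_, fun i => ?_⟩
      · refine ((Sym.smooth (A := fun _ => if j = i then (1:ℝ) else 0) contDiffOn_const).mono
          (by norm_num)).congr ?_
        rintro ⟨x, y⟩ hp
        show (if j = i then (1:ℝ) else 0)
          = fderiv ℝ (fun x' : Ed d => x' j - y j) x (EuclideanSpace.single i 1)
        rw [(hasFDerivAt_coordX j x y).fderiv]
        simp [PiLp.proj_apply, EuclideanSpace.single_apply, eq_comm]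
      · refine ((Sym.smooth (A := fun _ => if j = i then (-1:ℝ) else 0) contDiffOn_const).mono
          (by norm_num)).congr ?_
        rintro ⟨x, y⟩ hp
        show (if j = i then (-1:ℝ) else 0)
          = fderiv ℝ (fun y' : Ed d => x j - y' j) y (EuclideanSpace.single i 1)
        rw [(hasFDerivAt_coordY j x y).fderiv]
        simp only [ContinuousLinearMap.neg_apply, PiLp.proj_apply,
          EuclideanSpace.single_apply]
        by_cases hji : j = i <;> simp [hji, eq_comm]
  | invNorm =>
      refine ⟨?_, ?_, fun i => ?_, fun i => ?_⟩
      · rintro ⟨x, y⟩ hp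
        obtain ⟨L, hL, _⟩ := hasFDerivAt_invNormX (d := d) hp.2
        exact hL.differentiableAt
      · rintro ⟨x, y⟩ hp
        obtain ⟨L, hL, _⟩ := hasFDerivAt_invNormY (d := d) hp.2
        exact hL.differentiableAt
      · have hS : Sym d c₀ (-2)
            (fun x y => -((x i - y i) * (‖x - y‖⁻¹ * (‖x - y‖⁻¹ * ‖x - y‖⁻¹)))) :=
          (((Sym.coord i).mul (Sym.invNorm.mul (Sym.invNorm.mul Sym.invNorm))).of_eq
            (by norm_num)).neg
        refine (hS.of_eq (by norm_num)).congr ?_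
        rintro ⟨x, y⟩ hp
        obtain ⟨L, hL, hval⟩ := hasFDerivAt_invNormX (d := d) hp.2
        show -((x i - y i) * (‖x - y‖⁻¹ * (‖x - y‖⁻¹ * ‖x - y‖⁻¹)))
          = fderiv ℝ (fun x' => ‖x' - y‖⁻¹) x (EuclideanSpace.single i 1)
        rw [hL.fderiv, hval i]
      · have hS : Sym d c₀ (-2)
            (fun x y => (x i - y i) * (‖x - y‖⁻¹ * (‖x - y‖⁻¹ * ‖x - y‖⁻¹))) :=
          ((Sym.coord i).mul (Sym.invNorm.mul (Sym.invNorm.mul Sym.invNorm))).of_eq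
            (by norm_num)
        refine (hS.of_eq (by norm_num)).congr ?_
        rintro ⟨x, y⟩ hp
        obtain ⟨L, hL, hval⟩ := hasFDerivAt_invNormY (d := d) hp.2
        show (x i - y i) * (‖x - y‖⁻¹ * (‖x - y‖⁻¹ * ‖x - y‖⁻¹))
          = fderiv ℝ (fun y' => ‖x - y'‖⁻¹) y (EuclideanSpace.single i 1)
        rw [hL.fderiv, hval i]
  | zero e =>
      refine ⟨fun p hp => differentiableAt_const 0, fun p hp => differentiableAt_const 0,
        fun i => ?_, fun i => ?_⟩
      · refine (Sym.zero (e - 1)).congr ?_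
        rintro ⟨x, y⟩ hp
        show (0 : ℝ) = fderiv ℝ (fun _ : Ed d => (0:ℝ)) x (EuclideanSpace.single i 1)
        simp
      · refine (Sym.zero (e - 1)).congr ?_
        rintro ⟨x, y⟩ hp
        show (0 : ℝ) = fderiv ℝ (fun _ : Ed d => (0:ℝ)) y (EuclideanSpace.single i 1)
        simp
  | @add e' f' g' hf hg ihf ihg =>
      obtain ⟨hfx, hfy, hfpdx, hfpdy⟩ := ihf
      obtain ⟨hgx, hgy, hgpdx, hgpdy⟩ := ihg
      refine ⟨fun p hp => (hfx p hp).add (hgx p hp), fun p hp => (hfy p hp).add (hgy p hp),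
        fun i => ?_, fun i => ?_⟩
      · refine ((hfpdx i).add (hgpdx i)).congr ?_
        rintro ⟨x, y⟩ hp
        show pdx i f' x y + pdx i g' x y = fderiv ℝ (fun x' => f' x' y + g' x' y) x _
        rw [fderiv_fun_add (hfx (x, y) hp) (hgx (x, y) hp)]
        simp [pdx]
      · refine ((hfpdy i).add (hgpdy i)).congr ?_
        rintro ⟨x, y⟩ hp
        show pdy i f' x y + pdy i g' x y = fderiv ℝ (fun y' => f' x y' + g' x y') y _
        rw [fderiv_fun_add (hfy (x, y) hp) (hgy (x, y) hp)]
        simp [pdy]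
  | @mul e₁ e₂ f' g' hf hg ihf ihg =>
      obtain ⟨hfx, hfy, hfpdx, hfpdy⟩ := ihf
      obtain ⟨hgx, hgy, hgpdx, hgpdy⟩ := ihg
      refine ⟨fun p hp => (hfx p hp).mul (hgx p hp), fun p hp => (hfy p hp).mul (hgy p hp),
        fun i => ?_, fun i => ?_⟩
      · have hs : Sym d c₀ (e₁ + e₂ - 1)
            (fun x y => f' x y * pdx i g' x y + g' x y * pdx i f' x y) :=
          ((hf.mul (hgpdx i)).of_eq (by ring)).add ((hg.mul (hfpdx i)).of_eq (by ring))
        refine hs.congr ?_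
        rintro ⟨x, y⟩ hp
        show f' x y * pdx i g' x y + g' x y * pdx i f' x y
          = fderiv ℝ (fun x' => f' x' y * g' x' y) x _
        rw [fderiv_fun_mul (hfx (x, y) hp) (hgx (x, y) hp)]
        simp [pdx]
      · have hs : Sym d c₀ (e₁ + e₂ - 1)
            (fun x y => f' x y * pdy i g' x y + g' x y * pdy i f' x y) :=
          ((hf.mul (hgpdy i)).of_eq (by ring)).add ((hg.mul (hfpdy i)).of_eq (by ring))
        refine hs.congr ?_
        rintro ⟨x, y⟩ hp
        show f' x y * pdy i g' x y + g' x y * pdy i f' x y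
          = fderiv ℝ (fun y' => f' x y' * g' x y') y _
        rw [fderiv_fun_mul (hfy (x, y) hp) (hgy (x, y) hp)]
        simp [pdy]
  | @mono e' e'' f' hf hle ih =>
      obtain ⟨hfx, hfy, hfpdx, hfpdy⟩ := ih
      exact ⟨hfx, hfy, fun i => (hfpdx i).mono (by omega), fun i => (hfpdy i).mono (by omega)⟩
  | @congr e' f' g' hf heq ih =>
      obtain ⟨hfx, hfy, hfpdx, hfpdy⟩ := ih
      have hevX : ∀ {x y : Ed d}, (x, y) ∈ Uoff d c₀ →
          (fun x' => g' x' y) =ᶠ[𝓝 x] (fun x' => f' x' y) := by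
        intro x y hp
        filter_upwards [sectionX_nhds hp] with x' hx'
        exact (heq (x', y) hx').symm
      have hevY : ∀ {x y : Ed d}, (x, y) ∈ Uoff d c₀ →
          (fun y' => g' x y') =ᶠ[𝓝 y] (fun y' => f' x y') := by
        intro x y hp
        filter_upwards [sectionY_nhds hp] with y' hy'
        exact (heq (x, y') hy').symm
      refine ⟨?_, ?_, fun i => ?_, fun i => ?_⟩
      · rintro ⟨x, y⟩ hp
        exact (hfx (x, y) hp).congr_of_eventuallyEq (hevX hp)
      · rintro ⟨x, y⟩ hp
        exact (hfy (x, y) hp).congr_of_eventuallyEq (hevY hp)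
      · refine (hfpdx i).congr ?_
        rintro ⟨x, y⟩ hp
        show pdx i f' x y = pdx i g' x y
        simp only [pdx]
        rw [(hevX hp).fderiv_eq]
      · refine (hfpdy i).congr ?_
        rintro ⟨x, y⟩ hp
        show pdy i f' x y = pdy i g' x y
        simp only [pdy]
        rw [(hevY hp).fderiv_eq]

/-! ### Scfun specifics -/

lemma Dfun_swap (x y : Ed d) : Dfun y x = Dfun x y := by
  simp only [Dfun]; rw [real_inner_comm y x]; ring

lemma cF_swap (x y : Ed d) : cF (y, x) = cF (x, y) := by
  simp only [cF]; rw [real_inner_comm y x, Dfun_swap]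

lemma wF_swap (x y : Ed d) : wF (y, x) = wF (x, y) := by
  simp only [wF]; rw [real_inner_comm y x, Dfun_swap]

lemma Scfun_comm (x y : Ed d) : Scfun x y = Scfun y x := by
  simp only [Scfun]
  rw [real_inner_comm y x, Dfun_swap]

lemma Uset_swap {x y : Ed d} (hp : (x, y) ∈ Uset d c₀) : (y, x) ∈ Uset d c₀ :=
  ⟨hp.2.1, hp.1, by rw [Dfun_swap]; exact hp.2.2⟩

lemma normsq_eq_sum (u : Ed d) : ‖u‖ ^ 2 = ∑ j, u j * u j := by
  rw [EuclideanSpace.norm_eq, Real.sq_sqrt (by positivity)]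
  exact Finset.sum_congr rfl fun j _ => by
    rw [Real.norm_eq_abs, ← sq, sq_abs, sq]

lemma scfun_sectionX (hc₀ : 0 < c₀) {x y : Ed d}
    (hp : (x, y) ∈ Uset d c₀) (hxy : x ≠ y) :
    ∃ L : Ed d →L[ℝ] ℝ, HasFDerivAt (fun x' => Scfun x' y) L x ∧
      ∀ i, L (EuclideanSpace.single i 1)
        = (x i - cF (x, y) * y i) / (Real.sqrt (Dfun x y) * Real.sqrt (1 - cF (x, y) ^ 2)) := by
  have hDp : 0 < Dfun x y := Dpos hc₀ hp
  have hinner : HasFDerivAt (fun x' : Ed d => (inner ℝ x' y : ℝ))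
      ((fderivInnerCLM ℝ (x, y)).comp
        ((ContinuousLinearMap.id ℝ (Ed d)).prod 0)) x :=
    (hasFDerivAt_id x).inner ℝ (hasFDerivAt_const y x)
  have hself : HasFDerivAt (fun x' : Ed d => (inner ℝ x' x' : ℝ))
      ((fderivInnerCLM ℝ (x, x)).comp
        ((ContinuousLinearMap.id ℝ (Ed d)).prod (ContinuousLinearMap.id ℝ (Ed d)))) x :=
    (hasFDerivAt_id x).inner ℝ (hasFDerivAt_id x)
  have hDx : HasFDerivAt (fun x' : Ed d => Dfun x' y)
      ((((inner ℝ x y : ℝ)) • ((fderivInnerCLM ℝ (x, y)).comp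
          ((ContinuousLinearMap.id ℝ (Ed d)).prod 0))
        + ((inner ℝ x y : ℝ)) • ((fderivInnerCLM ℝ (x, y)).comp
          ((ContinuousLinearMap.id ℝ (Ed d)).prod 0)))
        - ((fderivInnerCLM ℝ (x, x)).comp
          ((ContinuousLinearMap.id ℝ (Ed d)).prod (ContinuousLinearMap.id ℝ (Ed d))))) x := by
    have hfun : (fun x' : Ed d => Dfun x' y)
        = fun x' : Ed d => (1 + (inner ℝ x' y : ℝ) * (inner ℝ x' y : ℝ) - (inner ℝ x' x' : ℝ)) - ‖y‖ ^ 2 :=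
      funext fun x' => by rw [Dfun, real_inner_self_eq_norm_sq]; ring
    rw [hfun]
    exact (((hinner.mul hinner).const_add 1).sub hself).sub_const (‖y‖ ^ 2)
  have hsqD : HasFDerivAt (fun x' : Ed d => Real.sqrt (Dfun x' y))
      ((1 / (2 * Real.sqrt (Dfun x y))) • _) x :=
    (Real.hasDerivAt_sqrt hDp.ne').comp_hasFDerivAt x hDx
  have hcs := hinner.add hsqD
  have hne1 : (inner ℝ x y : ℝ) + Real.sqrt (Dfun x y) ≠ -1 := by
    have := neg_one_lt_cF hc₀ hp; simp only [cF] at this; linarith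
  have hne2 : (inner ℝ x y : ℝ) + Real.sqrt (Dfun x y) ≠ 1 := by
    have := cF_lt_one hc₀ hp hxy; simp only [cF] at this; linarith
  have harc := (Real.hasDerivAt_arccos hne1 hne2).comp_hasFDerivAt x hcs
  refine ⟨_, harc, ?_⟩
  intro i
  have h1 : (inner ℝ x (EuclideanSpace.single i (1:ℝ)) : ℝ) = x i := by
    rw [EuclideanSpace.inner_single_right]; simp
  have h2 : (inner ℝ (EuclideanSpace.single i (1:ℝ)) y : ℝ) = y i := by
    rw [EuclideanSpace.inner_single_left]; simp
  have h3 : (inner ℝ (EuclideanSpace.single i (1:ℝ)) x : ℝ) = x i := by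
    rw [EuclideanSpace.inner_single_left]; simp
  simp only [ContinuousLinearMap.smul_apply, ContinuousLinearMap.add_apply,
    ContinuousLinearMap.sub_apply, ContinuousLinearMap.coe_comp', Function.comp_apply,
    ContinuousLinearMap.prod_apply, ContinuousLinearMap.id_apply,
    ContinuousLinearMap.zero_apply, fderivInnerCLM_apply, smul_eq_mul,
    inner_zero_right]
  rw [h1, h2, h3]
  have hs0 : Real.sqrt (Dfun x y) ≠ 0 := (Real.sqrt_pos.2 hDp).ne'
  have hr0 : Real.sqrt (1 - cF (x, y) ^ 2) ≠ 0 := by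
    apply (Real.sqrt_pos.2 _).ne'
    have ha := neg_one_lt_cF hc₀ hp
    have hb := cF_lt_one hc₀ hp hxy
    nlinarith
  simp only [cF] at hr0 ⊢
  set t := (inner ℝ x y : ℝ)
  set s := Real.sqrt (Dfun x y)
  set r := Real.sqrt (1 - (t + s) ^ 2)
  field_simp
  ring

lemma smoothA1 (hc₀ : 0 < c₀) :
    ContDiffOn ℝ (⊤ : ℕ∞) (fun p : Ed d × Ed d => (Real.sqrt (Dfun p.1 p.2))⁻¹) (Uset d c₀) := by
  apply (contDiffOn_sqrtD hc₀).inv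
  rintro ⟨x, y⟩ hp
  exact (Real.sqrt_pos.2 (Dpos hc₀ hp)).ne'

lemma smoothA2 (hc₀ : 0 < c₀) :
    ContDiffOn ℝ (⊤ : ℕ∞) (fun p : Ed d × Ed d => Real.sqrt (wF p / (1 + cF p))) (Uset d c₀) := by
  apply contDiffOn_sqrt_comp
  · exact (contDiffOn_wF hc₀).div (contDiffOn_const.add (contDiffOn_cF hc₀))
      (by rintro ⟨x, y⟩ hp; exact (one_add_cF_pos hc₀ hp).ne')
  · rintro ⟨x, y⟩ hp
    exact div_pos (wF_pos hc₀ hp) (one_add_cF_pos hc₀ hp)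

lemma Sym_secondFactor (hc₀ : 0 < c₀) :
    Sym d c₀ (-1) (fun x y : Ed d => (Real.sqrt (Dfun x y))⁻¹
      * (‖x - y‖⁻¹ * Real.sqrt (wF (x, y) / (1 + cF (x, y))))) :=
  ((Sym.smooth (smoothA1 hc₀)).mul (Sym.invNorm.mul (Sym.smooth (smoothA2 hc₀)))).of_eq
    (by norm_num)

lemma secondFactor_eq (hc₀ : 0 < c₀) {x y : Ed d} (hp : (x, y) ∈ Uset d c₀) :
    (Real.sqrt (Dfun x y))⁻¹ * (‖x - y‖⁻¹ * Real.sqrt (wF (x, y) / (1 + cF (x, y))))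
      = (Real.sqrt (Dfun x y))⁻¹ * (Real.sqrt (1 - cF (x, y) ^ 2))⁻¹ := by
  rw [inv_sqrt_one_sub_cF_sq hc₀ hp]

lemma Sym_sumsq : Sym d c₀ 2 (fun x y : Ed d => ∑ j, (x j - y j) * (x j - y j)) :=
  Sym.fsum fun j _ => ((Sym.coord j).mul (Sym.coord j)).of_eq (by norm_num)

lemma sumsq_eq (x y : Ed d) : (∑ j, (x j - y j) * (x j - y j)) = ‖x - y‖ ^ 2 := by
  rw [normsq_eq_sum (x - y)]
  exact Finset.sum_congr rfl fun j _ => by simp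

lemma firstFactorX_eq (hc₀ : 0 < c₀) {x y : Ed d} (hp : (x, y) ∈ Uset d c₀) (i : Fin d) :
    (x i - y i) + (∑ j, (x j - y j) * (x j - y j)) * (y i / wF (x, y))
      = x i - cF (x, y) * y i := by
  have hw := wF_pos hc₀ hp
  have h1 := one_sub_cF hc₀ hp
  rw [sumsq_eq]
  have : ‖x - y‖ ^ 2 * (y i / wF (x, y)) = (‖x - y‖ ^ 2 / wF (x, y)) * y i := by ring
  rw [this, ← h1]
  ring

lemma Sym_pdx_Scfun (hc₀ : 0 < c₀) (hc₁ : c₀ < 1) (i : Fin d) :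
    Sym d c₀ 0 (pdx i (fun u v : Ed d => Scfun u v)) := by
  have hA3 : ContDiffOn ℝ (⊤ : ℕ∞) (fun p : Ed d × Ed d => p.2 i / wF p) (Uset d c₀) :=
    (contDiffOn_coord2 i).div (contDiffOn_wF hc₀)
      (by rintro ⟨x, y⟩ hp; exact (wF_pos hc₀ hp).ne')
  have h1 : Sym d c₀ 1 (fun x y : Ed d => (x i - y i)
      + (∑ j, (x j - y j) * (x j - y j)) * (y i / wF (x, y))) :=
    (Sym.coord i).add ((Sym_sumsq.mul (Sym.smooth hA3)).mono (by norm_num))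
  refine ((h1.mul (Sym_secondFactor hc₀)).of_eq (by norm_num)).congr ?_
  rintro ⟨x, y⟩ hp
  obtain ⟨L, hL, hval⟩ := scfun_sectionX hc₀ hp.1 hp.2
  have hpd : pdx i (fun u v : Ed d => Scfun u v) x y = L (EuclideanSpace.single i 1) := by
    show fderiv ℝ (fun x' => Scfun x' y) x (EuclideanSpace.single i 1) = _
    rw [hL.fderiv]
  show _ = pdx i (fun u v : Ed d => Scfun u v) x y
  rw [hpd, hval i, secondFactor_eq hc₀ hp.1, firstFactorX_eq hc₀ hp.1 i,
    div_eq_mul_inv, mul_inv]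

lemma firstFactorY_eq (hc₀ : 0 < c₀) {x y : Ed d} (hp : (x, y) ∈ Uset d c₀) (i : Fin d) :
    -(x i - y i) + (∑ j, (x j - y j) * (x j - y j)) * (x i / wF (x, y))
      = y i - cF (x, y) * x i := by
  have hw := wF_pos hc₀ hp
  have h1 := one_sub_cF hc₀ hp
  rw [sumsq_eq]
  have : ‖x - y‖ ^ 2 * (x i / wF (x, y)) = (‖x - y‖ ^ 2 / wF (x, y)) * x i := by ring
  rw [this, ← h1]
  ring

lemma Sym_pdy_Scfun (hc₀ : 0 < c₀) (hc₁ : c₀ < 1) (i : Fin d) :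
    Sym d c₀ 0 (pdy i (fun u v : Ed d => Scfun u v)) := by
  have hA3 : ContDiffOn ℝ (⊤ : ℕ∞) (fun p : Ed d × Ed d => p.1 i / wF p) (Uset d c₀) :=
    (contDiffOn_coord1 i).div (contDiffOn_wF hc₀)
      (by rintro ⟨x, y⟩ hp; exact (wF_pos hc₀ hp).ne')
  have h1 : Sym d c₀ 1 (fun x y : Ed d => -(x i - y i)
      + (∑ j, (x j - y j) * (x j - y j)) * (x i / wF (x, y))) :=
    ((Sym.coord i).neg).add ((Sym_sumsq.mul (Sym.smooth hA3)).mono (by norm_num))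
  refine ((h1.mul (Sym_secondFactor hc₀)).of_eq (by norm_num)).congr ?_
  rintro ⟨x, y⟩ hp
  have hyx : (y, x) ∈ Uset d c₀ := Uset_swap hp.1
  have hxy : y ≠ x := fun h => hp.2 h.symm
  obtain ⟨L, hL, hval⟩ := scfun_sectionX hc₀ hyx hxy
  have hflip : (fun y' => Scfun x y') = fun y' => Scfun y' x :=
    funext fun y' => Scfun_comm x y'
  have hpd : pdy i (fun u v : Ed d => Scfun u v) x y = L (EuclideanSpace.single i 1) := by
    show fderiv ℝ (fun y' => Scfun x y') y (EuclideanSpace.single i 1) = _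
    rw [hflip, hL.fderiv]
  show (-(x i - y i) + (∑ j, (x j - y j) * (x j - y j)) * (x i / wF (x, y))) *
      ((Real.sqrt (Dfun x y))⁻¹ * (‖x - y‖⁻¹ * Real.sqrt (wF (x, y) / (1 + cF (x, y)))))
    = pdy i (fun u v : Ed d => Scfun u v) x y
  rw [hpd, hval i, cF_swap x y, Dfun_swap x y, secondFactor_eq hc₀ hp.1,
    firstFactorY_eq hc₀ hp.1 i, div_eq_mul_inv, mul_inv]

/-! ### Bound on Scfun itself -/

lemma wF_ge (hc₀ : 0 < c₀) (hc₁ : c₀ < 1) {x y : Ed d} (hmem : (x, y) ∈ frakD d c₀) :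
    c₀ ≤ wF (x, y) := by
  have hx : ‖x‖ ≤ 1 - c₀ := hmem.1
  have hy : ‖y‖ ≤ 1 - c₀ := hmem.2.1
  have ht : |(inner ℝ x y : ℝ)| ≤ (1 - c₀) * (1 - c₀) := by
    calc |(inner ℝ x y : ℝ)| ≤ ‖x‖ * ‖y‖ := abs_real_inner_le_norm x y
      _ ≤ (1 - c₀) * (1 - c₀) := by
          apply mul_le_mul hx hy (norm_nonneg _) (by linarith)
  have := abs_le.1 ht
  have hs := Real.sqrt_nonneg (Dfun x y)
  simp only [wF]
  nlinarith

lemma Scfun_bound (hc₀ : 0 < c₀) (hc₁ : c₀ < 1) (x y : Ed d)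
    (hmem : (x, y) ∈ frakD d c₀) :
    |Scfun x y| ≤ (Real.pi / Real.sqrt (2 * c₀)) * ‖x - y‖ := by
  have hU : (x, y) ∈ Uset d c₀ := frakD_subset_Uset hc₀ hc₁ hmem
  have hcle := cF_le_one hc₀ hU
  have hcgt := neg_one_lt_cF hc₀ hU
  have hw := wF_pos hc₀ hU
  have hwc := wF_ge hc₀ hc₁ hmem
  have hpi := Real.pi_pos
  have hSc : Scfun x y = Real.arccos (cF (x, y)) := rfl
  have h0 : 0 ≤ Scfun x y := by rw [hSc]; exact Real.arccos_nonneg _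
  have hSpi : Scfun x y ≤ Real.pi := by rw [hSc]; exact Real.arccos_le_pi _
  have hJ := Real.mul_le_sin (x := Scfun x y / 2) (by linarith) (by linarith)
  have hhalf : Real.sin (Scfun x y / 2) = Real.sqrt ((1 - cF (x, y)) / 2) := by
    rw [Real.sin_half_eq_sqrt (by linarith) (by linarith)]
    congr 2
    rw [hSc, Real.cos_arccos (by linarith) hcle]
  have hq : (1 - cF (x, y)) / 2 = ‖x - y‖ ^ 2 / (2 * wF (x, y)) := by
    rw [one_sub_cF hc₀ hU]; ring
  have hle : (1 - cF (x, y)) / 2 ≤ ‖x - y‖ ^ 2 / (2 * c₀) := by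
    rw [hq]
    apply div_le_div_of_nonneg_left (sq_nonneg _) (by positivity) (by linarith)
  have hsq : Real.sqrt (‖x - y‖ ^ 2 / (2 * c₀)) = ‖x - y‖ / Real.sqrt (2 * c₀) := by
    rw [Real.sqrt_div (sq_nonneg _), Real.sqrt_sq (norm_nonneg _)]
  have hchain : Scfun x y ≤ Real.pi * Real.sin (Scfun x y / 2) := by
    have h2 : 2 / Real.pi * (Scfun x y / 2) = Scfun x y / Real.pi := by
      field_simp
    rw [h2] at hJ
    rw [div_le_iff₀ hpi] at hJ
    linarith [hJ]
  calc |Scfun x y| = Scfun x y := abs_of_nonneg h0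
    _ ≤ Real.pi * Real.sin (Scfun x y / 2) := hchain
    _ = Real.pi * Real.sqrt ((1 - cF (x, y)) / 2) := by rw [hhalf]
    _ ≤ Real.pi * Real.sqrt (‖x - y‖ ^ 2 / (2 * c₀)) := by
        apply mul_le_mul_of_nonneg_left (Real.sqrt_le_sqrt hle) hpi.le
    _ = Real.pi / Real.sqrt (2 * c₀) * ‖x - y‖ := by rw [hsq]; ring

/-! ### Assembly -/

def Qp (d : ℕ) (c₀ : ℝ) (N : ℕ) (f : Ed d → Ed d → ℝ) : Prop :=
  (N = 0 ∧ f = fun u v : Ed d => Scfun u v) ∨ Sym d c₀ (1 - (N : ℤ)) f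

lemma Qp_of_eqN {N M : ℕ} {f : Ed d → Ed d → ℝ} (h : Qp d c₀ N f) (hNM : N = M) :
    Qp d c₀ M f := hNM ▸ h

lemma Qp_step_x (hc₀ : 0 < c₀) (hc₁ : c₀ < 1) {N : ℕ} {f : Ed d → Ed d → ℝ}
    (i : Fin d) (h : Qp d c₀ N f) : Qp d c₀ (N + 1) (pdx i f) := by
  rcases h with ⟨hN, rfl⟩ | h
  · right; subst hN
    exact (Sym_pdx_Scfun hc₀ hc₁ i).of_eq (by norm_num)
  · right
    exact ((h.deriv hc₀).2.2.1 i).of_eq (by push_cast; ring)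

lemma Qp_step_y (hc₀ : 0 < c₀) (hc₁ : c₀ < 1) {N : ℕ} {f : Ed d → Ed d → ℝ}
    (i : Fin d) (h : Qp d c₀ N f) : Qp d c₀ (N + 1) (pdy i f) := by
  rcases h with ⟨hN, rfl⟩ | h
  · right; subst hN
    exact (Sym_pdy_Scfun hc₀ hc₁ i).of_eq (by norm_num)
  · right
    exact ((h.deriv hc₀).2.2.2 i).of_eq (by push_cast; ring)

lemma Qp_iter {step : Fin d → (Ed d → Ed d → ℝ) → (Ed d → Ed d → ℝ)}
    (hstep : ∀ {N : ℕ} {f : Ed d → Ed d → ℝ} (i : Fin d),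
      Qp d c₀ N f → Qp d c₀ (N + 1) (step i f))
    (m : ℕ) (i : Fin d) : ∀ {N : ℕ} {f : Ed d → Ed d → ℝ},
      Qp d c₀ N f → Qp d c₀ (N + m) ((step i)^[m] f) := by
  induction m with
  | zero => intro N f h; simpa using h
  | succ m ih =>
      intro N f h
      rw [Function.iterate_succ_apply']
      exact Qp_of_eqN (hstep i (ih h)) (by omega)

lemma Qp_foldr {step : Fin d → (Ed d → Ed d → ℝ) → (Ed d → Ed d → ℝ)}
    (hstep : ∀ {N : ℕ} {f : Ed d → Ed d → ℝ} (i : Fin d),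
      Qp d c₀ N f → Qp d c₀ (N + 1) (step i f))
    (κ : Fin d → ℕ) :
    ∀ (l : List (Fin d)) {N : ℕ} {f : Ed d → Ed d → ℝ}, Qp d c₀ N f →
      Qp d c₀ (N + (l.map κ).sum) (l.foldr (fun i g => (step i)^[κ i] g) f) := by
  intro l
  induction l with
  | nil => intro N f h; simpa using h
  | cons a t ih =>
      intro N f h
      have h2 := Qp_iter hstep (κ a) a (ih h)
      refine Qp_of_eqN h2 ?_
      simp only [List.map_cons, List.sum_cons]
      omega

end Lem24

open Lem24

/-- **Lemma 2.4.** Derivative bounds for the critical point `S_c(x,y)`. -/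
theorem Sc_derivative_bounds
    (d : ℕ) (hd : 1 ≤ d) (c₀ : ℝ) (hc₀ : 0 < c₀) (hc₀' : c₀ < 1)
    (α β : Fin d → ℕ) :
    ∃ C : ℝ, ∀ x y : Ed d, (x, y) ∈ frakD d c₀ → x ≠ y →
      |mpdx α (mpdy β (fun u v => Scfun u v)) x y| ≤
        C * ‖x - y‖ ^ ((1 : ℤ) - (∑ i, (α i : ℤ)) - ∑ i, (β i : ℤ)) := by
  classical
  have h0 : Qp d c₀ 0 (fun u v : Ed d => Scfun u v) := Or.inl ⟨rfl, rfl⟩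
  have h1 := Qp_foldr (Qp_step_y hc₀ hc₀') β (List.finRange d) h0
  have h2 := Qp_foldr (Qp_step_x hc₀ hc₀') α (List.finRange d) h1
  have hexp : ((1 : ℤ) - (∑ i, (α i : ℤ)) - ∑ i, (β i : ℤ))
      = 1 - ((0 + ((List.finRange d).map β).sum + ((List.finRange d).map α).sum : ℕ) : ℤ) := by
    have hα : (∑ i, (α i : ℤ)) = ((((List.finRange d).map α).sum : ℕ) : ℤ) := by
      rw [← Nat.cast_sum, Fin.sum_univ_def]
    have hβ : (∑ i, (β i : ℤ)) = ((((List.finRange d).map β).sum : ℕ) : ℤ) := by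
      rw [← Nat.cast_sum, Fin.sum_univ_def]
    rw [hα, hβ]
    push_cast
    ring
  have hgoal : Qp d c₀ (0 + ((List.finRange d).map β).sum + ((List.finRange d).map α).sum)
      (mpdx α (mpdy β (fun u v : Ed d => Scfun u v))) := h2
  rcases hgoal with ⟨hN0, hf⟩ | hS
  · refine ⟨Real.pi / Real.sqrt (2 * c₀), fun x y hmem hxy => ?_⟩
    rw [hexp, hN0]
    rw [hf]
    simpa using Scfun_bound hc₀ hc₀' x y hmem
  · obtain ⟨C, hC0, hC⟩ := hS.bound hc₀ hc₀'
    refine ⟨C, fun x y hmem hxy => ?_⟩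
    rw [hexp]
    exact hC x y hmem hxy


end Paper
end
end

section
/- Let d ≥ 1 and z, z' ∈ ℝ^{2d} with 0 < |z − z'| < 2, and write v = z − z', 𝔖_c = 𝔖_c(z,z'). Then ∂_w ∂_w^⊤ ⟨∂_z Φ_L(z,w), ν(z,z')⟩ |_{w=z'} = −(cos² 𝔖_c · |z−z'|⁴)^{−1} M(z,z'), where M(z,z') := v v^⊤ − 2 cos² 𝔖_c · v v^⊤ + cos² 𝔖_c · (v^⊤ v) I_{2d} + sin 𝔖_c cos 𝔖_c · (v v^⊤ S − S v v^⊤). -/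
open MeasureTheory Matrix Filter
open scoped ENNReal Topology

noncomputable section

namespace Paper

/-! ### Auxiliary one-dimensional calculus for Lemma 3.5 -/

def psiF (s : ℝ) : ℝ := Real.arcsin (Real.sqrt s / 2) + Real.sqrt s * Real.sqrt (4 - s) / 4
def hh (s : ℝ) : ℝ := Real.sqrt (4 - s) / (2 * Real.sqrt s)
def hh1 (s : ℝ) : ℝ := -(Real.sqrt (4 - s) * s * Real.sqrt s)⁻¹
def hh2 (s : ℝ) : ℝ := 2 * (3 - s) / (Real.sqrt s * Real.sqrt (4 - s) ^ 3 * s ^ 2)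

lemma hasDerivAt_sqrt4sub {s : ℝ} (hs4 : s < 4) :
    HasDerivAt (fun t : ℝ => Real.sqrt (4 - t)) (-(1 / (2 * Real.sqrt (4 - s)))) s := by
  have h1 : HasDerivAt (fun t : ℝ => 4 - t) (-1) s := by
    exact (hasDerivAt_id' (x := s)).const_sub 4
  exact ((Real.hasDerivAt_sqrt (by linarith : 4 - s ≠ 0)).comp s h1).congr_deriv (by ring)

lemma hasDerivAt_psiF {s : ℝ} (hs : 0 < s) (hs4 : s < 4) : HasDerivAt psiF (hh s / 2) s := by
  have ha : 0 < Real.sqrt s := Real.sqrt_pos.2 hs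
  have hb : 0 < Real.sqrt (4 - s) := Real.sqrt_pos.2 (by linarith)
  have ha2 : Real.sqrt s ^ 2 = s := Real.sq_sqrt hs.le
  have hb2 : Real.sqrt (4 - s) ^ 2 = 4 - s := Real.sq_sqrt (by linarith)
  have hsqrt : HasDerivAt (fun t : ℝ => Real.sqrt t) (1 / (2 * Real.sqrt s)) s :=
    Real.hasDerivAt_sqrt hs.ne'
  have harg : HasDerivAt (fun t : ℝ => Real.sqrt t / 2) (1 / (2 * Real.sqrt s) / 2) s :=
    hsqrt.div_const 2
  have hx1 : Real.sqrt s / 2 ≠ -1 := by intro h; nlinarith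
  have hx2 : Real.sqrt s / 2 ≠ 1 := by intro h; nlinarith
  have harcsin := (Real.hasDerivAt_arcsin hx1 hx2).comp s harg
  have hprod : HasDerivAt (fun t : ℝ => Real.sqrt t * Real.sqrt (4 - t) / 4)
      ((1 / (2 * Real.sqrt s) * Real.sqrt (4 - s) +
        Real.sqrt s * (-(1 / (2 * Real.sqrt (4 - s))))) / 4) s :=
    (hsqrt.mul (hasDerivAt_sqrt4sub hs4)).div_const 4
  have := harcsin.add hprod
  refine this.congr_deriv ?_
  symm
  have h14 : Real.sqrt (1 - (Real.sqrt s / 2) ^ 2) = Real.sqrt (4 - s) / 2 := by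
    rw [show 1 - (Real.sqrt s/2)^2 = (Real.sqrt (4 - s)/2)^2 by nlinarith]
    exact Real.sqrt_sq (by positivity)
  rw [h14]
  unfold hh
  field_simp
  ring_nf
  nlinarith [ha2, hb2, ha, hb, sq_nonneg (Real.sqrt s * Real.sqrt (4-s))]

lemma hasDerivAt_hh {s : ℝ} (hs : 0 < s) (hs4 : s < 4) : HasDerivAt hh (hh1 s) s := by
  have ha : 0 < Real.sqrt s := Real.sqrt_pos.2 hs
  have hb : 0 < Real.sqrt (4 - s) := Real.sqrt_pos.2 (by linarith)
  have ha2 : Real.sqrt s ^ 2 = s := Real.sq_sqrt hs.le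
  have hb2 : Real.sqrt (4 - s) ^ 2 = 4 - s := Real.sq_sqrt (by linarith)
  have hden : HasDerivAt (fun t : ℝ => 2 * Real.sqrt t) (2 * (1 / (2 * Real.sqrt s))) s :=
    (Real.hasDerivAt_sqrt hs.ne').const_mul 2
  have := (hasDerivAt_sqrt4sub hs4).div hden (by positivity)
  refine this.congr_deriv ?_
  symm
  unfold hh1
  field_simp
  ring_nf
  linear_combination (s - 4 + 16*Real.sqrt s*Real.sqrt (4-s) - 4*Real.sqrt s*Real.sqrt (4-s)*s) * ha2 +
    (s - 4*Real.sqrt s*Real.sqrt (4-s)*s) * hb2 +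
    (4*Real.sqrt s*Real.sqrt (4-s)*(s-4)) * ha2 + (4*Real.sqrt s*Real.sqrt (4-s)*s) * hb2

lemma hasDerivAt_hh1 {s : ℝ} (hs : 0 < s) (hs4 : s < 4) : HasDerivAt hh1 (hh2 s) s := by
  have ha : 0 < Real.sqrt s := Real.sqrt_pos.2 hs
  have hb : 0 < Real.sqrt (4 - s) := Real.sqrt_pos.2 (by linarith)
  have ha2 : Real.sqrt s ^ 2 = s := Real.sq_sqrt hs.le
  have hb2 : Real.sqrt (4 - s) ^ 2 = 4 - s := Real.sq_sqrt (by linarith)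
  have hden : HasDerivAt (fun t : ℝ => Real.sqrt (4 - t) * t * Real.sqrt t)
      ((-(1 / (2 * Real.sqrt (4 - s))) * s + Real.sqrt (4 - s) * 1) * Real.sqrt s +
        Real.sqrt (4 - s) * s * (1 / (2 * Real.sqrt s))) s :=
    ((hasDerivAt_sqrt4sub hs4).mul (hasDerivAt_id s)).mul (Real.hasDerivAt_sqrt hs.ne')
  have hne : Real.sqrt (4 - s) * s * Real.sqrt s ≠ 0 := by positivity
  have := (hden.inv hne).neg
  refine this.congr_deriv ?_
  symm
  unfold hh2
  field_simp
  ring_nf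
  linear_combination (-3*s - 24*s^2*Real.sqrt s*Real.sqrt (4-s)^3 + 4*s^2*Real.sqrt s*Real.sqrt (4-s)^5 +
      6*s^3*Real.sqrt s*Real.sqrt (4-s)^3 + 12 - 2*Real.sqrt (4-s)^2) * ha2 +
    (-3*s + 6*s^3*Real.sqrt s*Real.sqrt (4-s)^3) * hb2 +
    (Real.sqrt s*Real.sqrt (4-s)*(24*s^2*Real.sqrt (4-s)^2 - 4*s^2*Real.sqrt (4-s)^4 -
      6*s^3*Real.sqrt (4-s)^2)) * ha2 + (-6*s^3*Real.sqrt s*Real.sqrt (4-s)^3) * hb2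

/-! ### Euclidean auxiliaries -/

def uu {n : ℕ} (z w : Ed n) : ℝ := ∑ k, (z k - w k) ^ 2

lemma uu_eq_norm {n : ℕ} (z w : Ed n) : uu z w = ‖z - w‖ ^ 2 := by
  rw [EuclideanSpace.norm_eq, Real.sq_sqrt (by positivity)]
  refine Finset.sum_congr rfl fun k _ => ?_
  simp [Real.norm_eq_abs, sq_abs]

def projE {n : ℕ} (k : Fin n) : Ed n →L[ℝ] ℝ := EuclideanSpace.proj k

lemma eval_sum_proj {n : ℕ} (a : Fin n → ℝ) (j : Fin n) :
    (∑ k, a k • (projE k : Ed n →L[ℝ] ℝ)) (EuclideanSpace.single j 1) = a j := by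
  simp only [ContinuousLinearMap.coe_sum', Finset.sum_apply, ContinuousLinearMap.coe_smul',
    Pi.smul_apply, projE, PiLp.proj_apply, EuclideanSpace.single_apply, smul_eq_mul,
    mul_ite, mul_one, mul_zero]
  simp

def ell {n : ℕ} (z : Ed n) (ν : Fin n → ℝ) (w : Ed n) : ℝ := ∑ m, (z m - w m) * ν m

def LuC {n : ℕ} (z w : Ed n) : Ed n →L[ℝ] ℝ := ∑ k, (-(2 * (z k - w k))) • projE k

def LellC {n : ℕ} (ν : Fin n → ℝ) : Ed n →L[ℝ] ℝ := ∑ m, (-(ν m)) • projE m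

lemma hasFDerivAt_sq_coord {n : ℕ} (z : Ed n) (k : Fin n) (w : Ed n) :
    HasFDerivAt (fun w' : Ed n => (z k - w' k) ^ 2) ((-(2 * (z k - w k))) • (projE k : Ed n →L[ℝ] ℝ)) w := by
  have h : HasFDerivAt (fun w' : Ed n => z k - w' k) (-(projE k : Ed n →L[ℝ] ℝ)) w :=
    (projE k).hasFDerivAt.const_sub (z k)
  have h2 := h.fun_mul h
  have hfun : (fun w' : Ed n => (z k - w' k) * (z k - w' k)) = fun w' => (z k - w' k) ^ 2 := by
    funext w'; rw [sq]
  rw [hfun] at h2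
  have hEq : (z k - w k) • -(projE k : Ed n →L[ℝ] ℝ) + (z k - w k) • -(projE k : Ed n →L[ℝ] ℝ) =
      (-(2 * (z k - w k))) • (projE k : Ed n →L[ℝ] ℝ) := by
    ext x; simp [PiLp.proj_apply]; ring
  exact hEq ▸ h2

lemma hasFDerivAt_uu {n : ℕ} (z w : Ed n) :
    HasFDerivAt (fun w' => uu z w') (LuC z w) w := by
  exact HasFDerivAt.fun_sum fun k _ => hasFDerivAt_sq_coord z k w

lemma hasFDerivAt_ell {n : ℕ} (z : Ed n) (ν : Fin n → ℝ) (w : Ed n) :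
    HasFDerivAt (ell z ν) (LellC ν) w := by
  refine HasFDerivAt.fun_sum fun m _ => ?_
  have h : HasFDerivAt (fun w' : Ed n => z m - w' m) (-(projE m : Ed n →L[ℝ] ℝ)) w :=
    (projE m).hasFDerivAt.const_sub (z m)
  have h2 := h.mul_const (ν m)
  have hEq : (ν m) • -(projE m : Ed n →L[ℝ] ℝ) = (-(ν m)) • (projE m : Ed n →L[ℝ] ℝ) := by
    ext x; simp
  exact hEq ▸ h2

/-- derivative of `uu z w` in the first variable. -/
def LuzC {n : ℕ} (z w : Ed n) : Ed n →L[ℝ] ℝ := ∑ k, (2 * (z k - w k)) • projE k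

lemma hasFDerivAt_uuz {n : ℕ} (z w : Ed n) :
    HasFDerivAt (fun z' => uu z' w) (LuzC z w) z := by
  refine HasFDerivAt.fun_sum fun k _ => ?_
  have h : HasFDerivAt (fun z' : Ed n => z' k - w k) ((projE k : Ed n →L[ℝ] ℝ)) z :=
    (projE k).hasFDerivAt.sub_const (w k)
  have h2 := h.fun_mul h
  have hfun : (fun z' : Ed n => (z' k - w k) * (z' k - w k)) = fun z' => (z' k - w k) ^ 2 := by
    funext z'; rw [sq]
  rw [hfun] at h2
  have hEq : (z k - w k) • (projE k : Ed n →L[ℝ] ℝ) + (z k - w k) • (projE k : Ed n →L[ℝ] ℝ) =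
      (2 * (z k - w k)) • (projE k : Ed n →L[ℝ] ℝ) := by
    ext x; simp [PiLp.proj_apply]; ring
  exact hEq ▸ h2

/-! ### The symplectic form as a linear map -/

/-- derivative of `symp d z w` in `z`, as a continuous linear map. -/
def LsympC (d : ℕ) (w : Ed (2 * d)) : Ed (2 * d) →L[ℝ] ℝ :=
  ∑ i : Fin d,
    ((w ⟨i.1, by have := i.2; omega⟩) • projE ⟨d + i.1, by have := i.2; omega⟩ -
     (w ⟨d + i.1, by have := i.2; omega⟩) • projE ⟨i.1, by have := i.2; omega⟩)

lemma hasFDerivAt_symp (d : ℕ) (w z : Ed (2 * d)) :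
    HasFDerivAt (fun z' => symp d z' w) (LsympC d w) z := by
  have : (fun z' : Ed (2*d) => symp d z' w) = fun z' => LsympC d w z' := by
    funext z'
    unfold symp LsympC
    simp only [ContinuousLinearMap.coe_sum', Finset.sum_apply, ContinuousLinearMap.coe_sub',
      Pi.sub_apply, ContinuousLinearMap.coe_smul', Pi.smul_apply, projE,
      PiLp.proj_apply, smul_eq_mul]
    refine Finset.sum_congr rfl fun i _ => ?_
    ring
  rw [this]
  exact (LsympC d w).hasFDerivAt

/-- the value `LsympC d w (single m 1)` as a linear function of `w`. -/
def sympD (d : ℕ) (m : Fin (2 * d)) : Ed (2 * d) →L[ℝ] ℝ :=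
  ∑ i : Fin d,
    (((EuclideanSpace.single m (1:ℝ)) ⟨d + i.1, by have := i.2; omega⟩) •
        projE ⟨i.1, by have := i.2; omega⟩ -
     ((EuclideanSpace.single m (1:ℝ)) ⟨i.1, by have := i.2; omega⟩) •
        projE ⟨d + i.1, by have := i.2; omega⟩)

lemma LsympC_eval (d : ℕ) (w : Ed (2 * d)) (m : Fin (2 * d)) :
    LsympC d w (EuclideanSpace.single m 1) = sympD d m w := by
  unfold LsympC sympD
  simp only [ContinuousLinearMap.coe_sum', Finset.sum_apply, ContinuousLinearMap.coe_sub',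
    Pi.sub_apply, ContinuousLinearMap.coe_smul', Pi.smul_apply, projE,
    PiLp.proj_apply, smul_eq_mul]
  refine Finset.sum_congr rfl fun i _ => ?_
  ring

/-! ### The key pointwise formula for `Φ_L` and its `z`-gradient -/

lemma PhiL_eq (d : ℕ) (z w : Ed (2 * d)) (h2 : ‖z - w‖ < 2) :
    PhiL d z w = psiF (uu z w) + symp d z w / 2 := by
  have hr0 : 0 ≤ ‖z - w‖ := norm_nonneg _
  have hsqrtuu : Real.sqrt (uu z w) = ‖z - w‖ := by
    rw [uu_eq_norm]; exact Real.sqrt_sq hr0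
  have hsin : Real.sin (Real.arcsin (‖z - w‖ / 2)) = ‖z - w‖ / 2 :=
    Real.sin_arcsin (by linarith) (by linarith)
  have hcos : Real.cos (Real.arcsin (‖z - w‖ / 2)) = Real.sqrt (1 - (‖z - w‖ / 2) ^ 2) :=
    Real.cos_arcsin _
  have hb2 : Real.sqrt (4 - uu z w) ^ 2 = 4 - uu z w := by
    rw [Real.sq_sqrt]; rw [uu_eq_norm]; nlinarith
  have h14 : Real.sqrt (1 - (‖z - w‖ / 2) ^ 2) = Real.sqrt (4 - uu z w) / 2 := by
    rw [show 1 - (‖z - w‖/2)^2 = (Real.sqrt (4 - uu z w)/2)^2 by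
      rw [div_pow, div_pow, hb2, uu_eq_norm]; ring]
    exact Real.sqrt_sq (by positivity)
  unfold PhiL PL SfrC psiF
  rw [hsin, hcos, h14, hsqrtuu]
  rcases eq_or_lt_of_le hr0 with h0 | h0
  · rw [← h0]
    norm_num
  · rw [uu_eq_norm]
    have hne : ‖z - w‖ ≠ 0 := h0.ne'
    field_simp

lemma pdx_PhiL (d : ℕ) (z w : Ed (2 * d)) (h0 : z ≠ w) (h2 : ‖z - w‖ < 2) (m : Fin (2 * d)) :
    pdx m (PhiL d) z w = hh (uu z w) * (z m - w m) + sympD d m w / 2 := by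
  have hnorm : 0 < ‖z - w‖ := by
    rw [norm_pos_iff]; exact sub_ne_zero.2 h0
  have hs0 : 0 < uu z w := by rw [uu_eq_norm]; positivity
  have hs4 : uu z w < 4 := by rw [uu_eq_norm]; nlinarith
  have hopen : IsOpen {z' : Ed (2*d) | ‖z' - w‖ < 2} :=
    isOpen_lt ((continuous_id.sub continuous_const).norm) continuous_const
  have hev : (fun z' => PhiL d z' w) =ᶠ[nhds z]
      (fun z' => psiF (uu z' w) + symp d z' w / 2) := by
    filter_upwards [hopen.mem_nhds h2] with z' hz' using PhiL_eq d z' w hz'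
  have hder : HasFDerivAt (fun z' => psiF (uu z' w) + symp d z' w / 2)
      ((hh (uu z w) / 2) • LuzC z w + (2:ℝ)⁻¹ • LsympC d w) z := by
    have h1 := (hasDerivAt_psiF hs0 hs4).comp_hasFDerivAt z (hasFDerivAt_uuz z w)
    have h2' := (hasFDerivAt_symp d w z).const_mul (2:ℝ)⁻¹
    refine (h1.add h2').congr_of_eventuallyEq ?_
    filter_upwards with z'
    simp [Function.comp]
    ring
  show fderiv ℝ (fun z' => PhiL d z' w) z (EuclideanSpace.single m 1) = _
  rw [hev.fderiv_eq, hder.fderiv]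
  simp only [ContinuousLinearMap.add_apply, ContinuousLinearMap.coe_smul', Pi.smul_apply,
    smul_eq_mul]
  rw [LsympC_eval]
  have : (LuzC z w) (EuclideanSpace.single m 1) = 2 * (z m - w m) := by
    unfold LuzC; exact eval_sum_proj _ m
  rw [this]
  ring


/-! ### Properties of `Smat` -/

lemma Smat_skew (d : ℕ) (i j : Fin (2 * d)) : Smat d i j = - Smat d j i := by
  have hi := i.2
  have hj := j.2
  unfold Smat
  split_ifs
  all_goals (try norm_num)
  all_goals omega

lemma sum_mul_Smat (d : ℕ) (x : Fin (2 * d) → ℝ) (j : Fin (2 * d)) :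
    ∑ k, x k * Smat d k j = -((Smat d).mulVec x j) := by
  have : (Smat d).mulVec x j = ∑ k, Smat d j k * x k := by
    simp [Matrix.mulVec, dotProduct]
  rw [this, ← Finset.sum_neg_distrib]
  refine Finset.sum_congr rfl fun k _ => ?_
  rw [Smat_skew d k j]
  ring

lemma sum_mul_mulVec_Smat_self (d : ℕ) (x : Fin (2 * d) → ℝ) :
    ∑ m, x m * (Smat d).mulVec x m = 0 := by
  have h1 : ∑ m, x m * (Smat d).mulVec x m = ∑ m, ∑ k, x m * Smat d m k * x k := by
    refine Finset.sum_congr rfl fun m _ => ?_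
    simp [Matrix.mulVec, dotProduct, Finset.mul_sum, mul_assoc]
  have h2 : (∑ m, ∑ k, x m * Smat d m k * x k) = - ∑ m, ∑ k, x m * Smat d m k * x k := by
    calc (∑ m, ∑ k, x m * Smat d m k * x k)
        = ∑ k, ∑ m, x m * Smat d m k * x k := Finset.sum_comm
      _ = ∑ k, ∑ m, -(x k * Smat d k m * x m) := by
          refine Finset.sum_congr rfl fun o _ => Finset.sum_congr rfl fun m _ => ?_
          rw [Smat_skew d m o]; ring
      _ = - ∑ k, ∑ m, x k * Smat d k m * x m := by simp
      _ = - ∑ m, ∑ k, x m * Smat d m k * x k := rfl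
  rw [h1]
  linarith [h2]

set_option maxHeartbeats 2000000 in
/-- **Lemma 3.5.** Explicit formula for the second fundamental form matrix. -/
theorem hessWL_formula
    (d : ℕ) (hd : 1 ≤ d) (z z' : Ed (2 * d))
    (hne : z ≠ z') (hlt : ‖z - z'‖ < 2) :
    hessWL d z z' =
      (-(Real.cos (SfrC z z') ^ 2 * ‖z - z'‖ ^ 4)⁻¹) • MmatL d z z' := by
  have hr0 : 0 < ‖z - z'‖ := norm_pos_iff.2 (sub_ne_zero.2 hne)
  have hsin : Real.sin (SfrC z z') = ‖z - z'‖ / 2 := by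
    unfold SfrC
    exact Real.sin_arcsin (by linarith) (by linarith)
  have hcos : Real.cos (SfrC z z') = Real.sqrt (1 - (‖z - z'‖ / 2) ^ 2) := by
    unfold SfrC; exact Real.cos_arcsin _
  have hcpos : 0 < Real.cos (SfrC z z') := by
    rw [hcos]; apply Real.sqrt_pos.2; nlinarith
  have hc2 : Real.cos (SfrC z z') ^ 2 = 1 - ‖z - z'‖ ^ 2 / 4 := by
    rw [hcos, Real.sq_sqrt (by nlinarith)]; ring
  have huu : uu z z' = ‖z - z'‖ ^ 2 := uu_eq_norm z z'
  have hs0' : 0 < uu z z' := by rw [huu]; positivity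
  have hs4' : uu z z' < 4 := by rw [huu]; nlinarith
  have hsq : Real.sqrt (uu z z') = ‖z - z'‖ := by rw [huu]; exact Real.sqrt_sq hr0.le
  have hsq4 : Real.sqrt (4 - uu z z') = 2 * Real.cos (SfrC z z') := by
    rw [huu, show 4 - ‖z - z'‖ ^ 2 = (2 * Real.cos (SfrC z z')) ^ 2 by nlinarith]
    exact Real.sqrt_sq (by positivity)
  -- the open region
  have hUopen : IsOpen {w : Ed (2 * d) | 0 < ‖z - w‖ ∧ ‖z - w‖ < 2} := by
    have hcont : Continuous fun w : Ed (2 * d) => ‖z - w‖ :=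
      (continuous_const.sub continuous_id).norm
    exact (isOpen_lt continuous_const hcont).inter (isOpen_lt hcont continuous_const)
  have hz'U : z' ∈ {w : Ed (2 * d) | 0 < ‖z - w‖ ∧ ‖z - w‖ < 2} := ⟨hr0, hlt⟩
  ext i j
  show pd1 i (pd1 j (fun w => ∑ m, pdx m (PhiL d) z w * nuVec d z z' m)) z' =
    ((-(Real.cos (SfrC z z') ^ 2 * ‖z - z'‖ ^ 4)⁻¹) • MmatL d z z') i j
  set ν : Fin (2 * d) → ℝ := nuVec d z z' with hνdef
  set Q : Ed (2 * d) →L[ℝ] ℝ := ∑ m, (ν m / 2) • sympD d m with hQdef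
  -- formula for the integrand on the region
  have hFeq : ∀ w, 0 < ‖z - w‖ → ‖z - w‖ < 2 →
      ∑ m, pdx m (PhiL d) z w * ν m = hh (uu z w) * ell z ν w + Q w := by
    intro w hw1 hw2
    have hQw : Q w = ∑ m, ν m / 2 * sympD d m w := by
      rw [hQdef]
      simp [ContinuousLinearMap.coe_sum', Finset.sum_apply, smul_eq_mul]
    calc ∑ m, pdx m (PhiL d) z w * ν m
        = ∑ m, (hh (uu z w) * ((z m - w m) * ν m) + ν m / 2 * sympD d m w) := by
          refine Finset.sum_congr rfl fun m _ => ?_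
          rw [pdx_PhiL d z w (by intro h; rw [h] at hw1; simp at hw1) hw2 m]
          ring
      _ = hh (uu z w) * ell z ν w + Q w := by
          rw [Finset.sum_add_distrib, ← Finset.mul_sum, hQw]
          rfl
  -- first derivative on the region
  have hpd1 : ∀ w, 0 < ‖z - w‖ → ‖z - w‖ < 2 →
      pd1 j (fun w => ∑ m, pdx m (PhiL d) z w * ν m) w =
        hh (uu z w) * (-(ν j)) + ell z ν w * (hh1 (uu z w) * (-(2 * (z j - w j)))) +
          Q (EuclideanSpace.single j 1) := by
    intro w hw1 hw2
    have hs0 : 0 < uu z w := by rw [uu_eq_norm]; positivity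
    have hs4 : uu z w < 4 := by rw [uu_eq_norm]; nlinarith
    have hev : (fun w' => ∑ m, pdx m (PhiL d) z w' * ν m) =ᶠ[nhds w]
        (fun w' => hh (uu z w') * ell z ν w' + Q w') := by
      filter_upwards [hUopen.mem_nhds ⟨hw1, hw2⟩] with w' hw' using hFeq w' hw'.1 hw'.2
    have hhu : HasFDerivAt (fun w' => hh (uu z w')) (hh1 (uu z w) • LuC z w) w :=
      (hasDerivAt_hh hs0 hs4).comp_hasFDerivAt w (hasFDerivAt_uu z w)
    have hder : HasFDerivAt (fun w' => hh (uu z w') * ell z ν w' + Q w')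
        ((hh (uu z w) • LellC ν + ell z ν w • (hh1 (uu z w) • LuC z w)) + Q) w := by
      exact (hhu.mul (hasFDerivAt_ell z ν w)).add Q.hasFDerivAt
    show fderiv ℝ (fun w' => ∑ m, pdx m (PhiL d) z w' * ν m) w (EuclideanSpace.single j 1) = _
    rw [hev.fderiv_eq, hder.fderiv]
    have e1 : (LellC ν) (EuclideanSpace.single j 1) = -(ν j) := by
      unfold LellC; exact eval_sum_proj _ j
    have e2 : (LuC z w) (EuclideanSpace.single j 1) = -(2 * (z j - w j)) := by
      unfold LuC; exact eval_sum_proj _ j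
    simp only [ContinuousLinearMap.add_apply, ContinuousLinearMap.coe_smul', Pi.smul_apply,
      smul_eq_mul, e1, e2]
  -- second derivative at z'
  have hev2 : pd1 j (fun w => ∑ m, pdx m (PhiL d) z w * ν m) =ᶠ[nhds z']
      (fun w => hh (uu z w) * (-(ν j)) + ell z ν w * (hh1 (uu z w) * (-(2 * (z j - w j)))) +
        Q (EuclideanSpace.single j 1)) := by
    filter_upwards [hUopen.mem_nhds hz'U] with w hw using hpd1 w hw.1 hw.2
  have hhu' : HasFDerivAt (fun w => hh (uu z w)) (hh1 (uu z z') • LuC z z') z' :=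
    (hasDerivAt_hh hs0' hs4').comp_hasFDerivAt z' (hasFDerivAt_uu z z')
  have hh1u' : HasFDerivAt (fun w => hh1 (uu z w)) (hh2 (uu z z') • LuC z z') z' :=
    (hasDerivAt_hh1 hs0' hs4').comp_hasFDerivAt z' (hasFDerivAt_uu z z')
  have hlin : HasFDerivAt (fun w : Ed (2 * d) => -(2 * (z j - w j)))
      ((2:ℝ) • (projE j : Ed (2 * d) →L[ℝ] ℝ)) z' := by
    have h2' : HasFDerivAt (fun w : Ed (2 * d) => -(2 * (z j - w j)))
        (-((2:ℝ) • -(projE j : Ed (2 * d) →L[ℝ] ℝ))) z' :=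
      (((projE j : Ed (2 * d) →L[ℝ] ℝ).hasFDerivAt.const_sub (z j)).const_mul (2:ℝ)).neg
    have hEq : -((2:ℝ) • -(projE j : Ed (2 * d) →L[ℝ] ℝ)) =
        (2:ℝ) • (projE j : Ed (2 * d) →L[ℝ] ℝ) := by ext x; simp
    exact hEq ▸ h2'
  have hder2 : HasFDerivAt
      (fun w => hh (uu z w) * (-(ν j)) + ell z ν w * (hh1 (uu z w) * (-(2 * (z j - w j)))) +
        Q (EuclideanSpace.single j 1))
      (((-(ν j)) • (hh1 (uu z z') • LuC z z')) +
        (ell z ν z' • ((hh1 (uu z z') • ((2:ℝ) • (projE j : Ed (2 * d) →L[ℝ] ℝ))) +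
            ((-(2 * (z j - z' j)))) • (hh2 (uu z z') • LuC z z')) +
          (hh1 (uu z z') * (-(2 * (z j - z' j)))) • LellC ν)) z' := by
    exact ((hhu'.mul_const (-(ν j))).add
      ((hasFDerivAt_ell z ν z').mul (hh1u'.mul hlin))).add_const _
  show fderiv ℝ (pd1 j (fun w => ∑ m, pdx m (PhiL d) z w * ν m)) z' (EuclideanSpace.single i 1) = _
  rw [hev2.fderiv_eq, hder2.fderiv]
  have e1 : (LellC ν) (EuclideanSpace.single i 1) = -(ν i) := by
    unfold LellC; exact eval_sum_proj _ i
  have e2 : (LuC z z') (EuclideanSpace.single i 1) = -(2 * (z i - z' i)) := by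
    unfold LuC; exact eval_sum_proj _ i
  have e3 : (projE j : Ed (2 * d) →L[ℝ] ℝ) (EuclideanSpace.single i 1) =
      if j = i then 1 else 0 := by
    simp [projE, PiLp.proj_apply, EuclideanSpace.single_apply]
  simp only [ContinuousLinearMap.add_apply, ContinuousLinearMap.coe_smul', Pi.smul_apply,
    smul_eq_mul, e1, e2, e3]
  -- now pure algebra
  -- values of hh, hh1, hh2 at uu z z'
  have hhval : hh (uu z z') = Real.cos (SfrC z z') / ‖z - z'‖ := by
    unfold hh; rw [hsq, hsq4]
    field_simp
  have hh1val : hh1 (uu z z') = -(2 * Real.cos (SfrC z z') * ‖z - z'‖ ^ 3)⁻¹ := by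
    unfold hh1; rw [hsq, hsq4, huu]
    ring_nf
  have hh2val : hh2 (uu z z') =
      (3 - ‖z - z'‖ ^ 2) / (4 * Real.cos (SfrC z z') ^ 3 * ‖z - z'‖ ^ 5) := by
    unfold hh2; rw [hsq, hsq4, huu]
    ring_nf
  -- ν in closed form
  have hνm : ∀ m, ν m = Real.cos (SfrC z z') / ‖z - z'‖ * vVec d z z' m -
      (Smat d).mulVec (vVec d z z') m / 2 := by
    intro m
    rw [hνdef]
    unfold nuVec
    have hfun : (Smat d).mulVec (fun k => vVec d z z' k / ‖z - z'‖) m =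
        ((Smat d).mulVec (vVec d z z') m) / ‖z - z'‖ := by
      simp only [Matrix.mulVec, dotProduct, Finset.sum_div]
      exact Finset.sum_congr rfl fun k _ => by rw [mul_div_assoc]
    rw [hfun, hsin]
    field_simp
  have hsumvv : ∑ m, vVec d z z' m * vVec d z z' m = ‖z - z'‖ ^ 2 := by
    rw [← huu]
    unfold uu vVec
    exact Finset.sum_congr rfl fun m _ => by ring
  have hskew0 : ∑ m, vVec d z z' m * (Smat d).mulVec (vVec d z z') m = 0 :=
    sum_mul_mulVec_Smat_self d _
  have hell0 : ell z ν z' = ‖z - z'‖ * Real.cos (SfrC z z') := by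
    unfold ell
    calc ∑ m, (z m - z' m) * ν m
        = ∑ m, (Real.cos (SfrC z z') / ‖z - z'‖ * (vVec d z z' m * vVec d z z' m) -
            (vVec d z z' m * (Smat d).mulVec (vVec d z z') m) / 2) := by
          refine Finset.sum_congr rfl fun m _ => ?_
          rw [hνm m]
          unfold vVec
          ring
      _ = Real.cos (SfrC z z') / ‖z - z'‖ * (∑ m, vVec d z z' m * vVec d z z' m) -
            (∑ m, vVec d z z' m * (Smat d).mulVec (vVec d z z') m) / 2 := by
          rw [Finset.sum_sub_distrib, ← Finset.mul_sum, ← Finset.sum_div]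
      _ = ‖z - z'‖ * Real.cos (SfrC z z') := by
          rw [hsumvv, hskew0]
          field_simp
          ring
  -- expand the matrix side
  have hMentry : MmatL d z z' i j =
      vVec d z z' i * vVec d z z' j -
        2 * Real.cos (SfrC z z') ^ 2 * (vVec d z z' i * vVec d z z' j) +
        Real.cos (SfrC z z') ^ 2 * ‖z - z'‖ ^ 2 * (if i = j then 1 else 0) +
        ‖z - z'‖ / 2 * Real.cos (SfrC z z') *
          (vVec d z z' i * (-((Smat d).mulVec (vVec d z z') j)) -
            (Smat d).mulVec (vVec d z z') i * vVec d z z' j) := by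
    have hvvS : (Matrix.vecMulVec (vVec d z z') (vVec d z z') * Smat d) i j =
        vVec d z z' i * (-((Smat d).mulVec (vVec d z z') j)) := by
      rw [Matrix.mul_apply]
      calc ∑ k, Matrix.vecMulVec (vVec d z z') (vVec d z z') i k * Smat d k j
          = ∑ k, vVec d z z' i * (vVec d z z' k * Smat d k j) := by
            refine Finset.sum_congr rfl fun k _ => ?_
            rw [Matrix.vecMulVec_apply]; ring
        _ = vVec d z z' i * ∑ k, vVec d z z' k * Smat d k j := by rw [Finset.mul_sum]
        _ = _ := by rw [sum_mul_Smat]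
    have hSvv : (Smat d * Matrix.vecMulVec (vVec d z z') (vVec d z z')) i j =
        (Smat d).mulVec (vVec d z z') i * vVec d z z' j := by
      rw [Matrix.mul_apply]
      calc ∑ k, Smat d i k * Matrix.vecMulVec (vVec d z z') (vVec d z z') k j
          = (∑ k, Smat d i k * vVec d z z' k) * vVec d z z' j := by
            rw [Finset.sum_mul]
            refine Finset.sum_congr rfl fun k _ => ?_
            rw [Matrix.vecMulVec_apply]; ring
        _ = _ := by
            first
            | rfl
            | (congr 1; simp [Matrix.mulVec, dotProduct])
    unfold MmatL
    simp only [Matrix.add_apply, Matrix.sub_apply, Matrix.smul_apply, Matrix.one_apply,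
      Matrix.vecMulVec_apply, smul_eq_mul, hvvS, hSvv, hsin]
    have hdot : vVec d z z' ⬝ᵥ vVec d z z' = ‖z - z'‖ ^ 2 := by
      rw [dotProduct]; exact hsumvv
    rw [hdot]
    try ring
  rw [Matrix.smul_apply, hMentry, smul_eq_mul]
  rw [hh1val, hh2val, hell0, hνm i, hνm j]
  have hvv : ∀ m, vVec d z z' m = z m - z' m := fun m => rfl
  rw [hvv i, hvv j]
  set r := ‖z - z'‖ with hrdef
  set c := Real.cos (SfrC z z') with hcdef
  set Vi := z i - z' i with hVi
  set Vj := z j - z' j with hVj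
  set Wi := (Smat d).mulVec (vVec d z z') i with hWi
  set Wj := (Smat d).mulVec (vVec d z z') j with hWj
  have hrne : r ≠ 0 := ne_of_gt hr0
  have hcne : c ≠ 0 := ne_of_gt hcpos
  by_cases hij : i = j
  · subst hij
    simp only [if_pos rfl]
    field_simp
    linear_combination (-32*Vi*Vj) * hc2
  · simp only [if_neg (Ne.symm hij), if_neg hij]
    field_simp
    linear_combination (-32*Vi*Vj) * hc2

end Paper
end
end

section
/- Let d ≥ 1 and z, z' ∈ ℝ^{2d} with 0 < |z − z'| < 2; write v = z − z', 𝔖_c = 𝔖_c(z,z'), R = R(z,z'), and let M(z,z') := v v^⊤ − 2 cos² 𝔖_c · v v^⊤ + cos² 𝔖_c · (v^⊤ v) I_{2d} + sin 𝔖_c cos 𝔖_c · (v v^⊤ S − S v v^⊤). Let {v₁, …, v_{2d−2}} be any orthonormal basis of the orthogonal complement of span{v, Sv}, and let B be the 2d×2d matrix with columns (v₁, …, v_{2d−2}, Sv/|v|, v/|v|). Then B^⊤ R M R^⊤ B is the diagonal matrix whose first 2d−2 diagonal entries equal |v|² cos² 𝔖_c, whose (2d−1)-th diagonal entry equals |v|²,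 and whose (2d, 2d) entry equals 0. In particular, all nonzero eigenvalues of R M R^⊤ are positive and comparable to |z−z'|². -/
open MeasureTheory Matrix Filter
open scoped ENNReal Topology

noncomputable section

namespace Paper

lemma Smat_mulVec_apply (d : ℕ) (u : Fin (2 * d) → ℝ) (i : Fin (2 * d)) :
    (Smat d *ᵥ u) i =
      if h : i.1 < d then -u ⟨i.1 + d, by omega⟩
      else u ⟨i.1 - d, by have := i.2; omega⟩ := by
  simp only [Matrix.mulVec, dotProduct, Smat]
  split_ifs with h
  · rw [Finset.sum_eq_single (⟨i.1 + d, by omega⟩ : Fin (2 * d))]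
    · simp [h]
    · intro b _ hb
      have h1 : b.1 ≠ i.1 + d := fun hh => hb (Fin.ext hh)
      have h2 : ¬ d ≤ i.1 := not_le.2 h
      simp [h1, h2]
    · intro hmem; exact absurd (Finset.mem_univ _) hmem
  · rw [Finset.sum_eq_single (⟨i.1 - d, by have := i.2; omega⟩ : Fin (2 * d))]
    · have hd' : d ≤ i.1 := le_of_not_gt h
      have he : i.1 = i.1 - d + d := by omega
      simp [h, hd', ← he]
    · intro b _ hb
      have h1 : b.1 ≠ i.1 - d := fun hh => hb (Fin.ext hh)
      have h2 : i.1 ≠ b.1 + d := by omega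
      simp [h, h2]
    · intro hmem; exact absurd (Finset.mem_univ _) hmem

lemma Smat_mulVec_mulVec (d : ℕ) (u : Fin (2 * d) → ℝ) :
    Smat d *ᵥ (Smat d *ᵥ u) = -u := by
  funext i
  rw [Smat_mulVec_apply]
  split_ifs with h
  · rw [Smat_mulVec_apply, dif_neg (by simp only [Fin.val_mk]; omega)]
    rw [Pi.neg_apply, neg_inj]
    congr 1
    exact Fin.ext (by simp only [Fin.val_mk]; omega)
  · rw [Smat_mulVec_apply, dif_pos (by simp only [Fin.val_mk]; have := i.2; omega)]
    rw [Pi.neg_apply, neg_inj]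
    congr 1
    exact Fin.ext (by simp only [Fin.val_mk]; omega)

lemma Smat_transpose (d : ℕ) : (Smat d)ᵀ = -Smat d := by
  ext i j
  have hi := i.2
  have hj := j.2
  simp only [Matrix.transpose_apply, Matrix.neg_apply, Smat]
  split_ifs <;> (try norm_num) <;> omega

lemma Smat_mul_self (d : ℕ) : Smat d * Smat d = -1 := by
  ext i j
  have h := congrFun (Smat_mulVec_mulVec d (Pi.single j 1)) i
  rw [Matrix.mulVec_mulVec, Matrix.mulVec_single] at h
  simpa [Matrix.neg_apply, Matrix.one_apply, Pi.single_apply, eq_comm] using h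

lemma vecMulVec_mulVec' {n : ℕ} (a b u : Fin n → ℝ) :
    vecMulVec a b *ᵥ u = (b ⬝ᵥ u) • a := by
  funext i
  calc (vecMulVec a b *ᵥ u) i = ∑ j, a i * (b j * u j) := by
        simp [Matrix.mulVec, dotProduct, Matrix.vecMulVec_apply, mul_assoc]
    _ = a i * ∑ j, b j * u j := by rw [← Finset.mul_sum]
    _ = _ := by simp [dotProduct, mul_comm]

lemma RMR_mulVec {n : ℕ} (S : Matrix (Fin n) (Fin n) ℝ) (v w : Fin n → ℝ) (s c : ℝ)
    (hT : Sᵀ = -S) (hSS : S * S = -1) :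
    ((c • (1 : Matrix (Fin n) (Fin n) ℝ) - s • S) *
      (vecMulVec v v - (2 * c ^ 2) • vecMulVec v v +
        (c ^ 2 * (v ⬝ᵥ v)) • (1 : Matrix (Fin n) (Fin n) ℝ) +
        (s * c) • (vecMulVec v v * S - S * vecMulVec v v)) *
      (c • (1 : Matrix (Fin n) (Fin n) ℝ) - s • S)ᵀ) *ᵥ w =
    (c * ((1 - 2 * c ^ 2) * (c * (v ⬝ᵥ w) + s * (v ⬝ᵥ (S *ᵥ w))) +
          s * c * (c * (v ⬝ᵥ (S *ᵥ w)) - s * (v ⬝ᵥ w))) +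
       s * (-(s * c) * (c * (v ⬝ᵥ w) + s * (v ⬝ᵥ (S *ᵥ w))))) • v +
    (c * (-(s * c) * (c * (v ⬝ᵥ w) + s * (v ⬝ᵥ (S *ᵥ w)))) -
       s * ((1 - 2 * c ^ 2) * (c * (v ⬝ᵥ w) + s * (v ⬝ᵥ (S *ᵥ w))) +
          s * c * (c * (v ⬝ᵥ (S *ᵥ w)) - s * (v ⬝ᵥ w)))) • (S *ᵥ v) +
    (c ^ 2 * (v ⬝ᵥ v) * (c ^ 2 + s ^ 2)) • w := by
  have hRT : (c • (1 : Matrix (Fin n) (Fin n) ℝ) - s • S)ᵀ =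
      c • (1 : Matrix (Fin n) (Fin n) ℝ) + s • S := by
    rw [Matrix.transpose_sub, Matrix.transpose_smul, Matrix.transpose_smul,
      Matrix.transpose_one, hT, smul_neg, sub_neg_eq_add]
  have hSSv : ∀ x : Fin n → ℝ, S *ᵥ (S *ᵥ x) = -x := by
    intro x
    rw [Matrix.mulVec_mulVec, hSS, Matrix.neg_mulVec, Matrix.one_mulVec]
  rw [← Matrix.mulVec_mulVec, ← Matrix.mulVec_mulVec, hRT]
  simp only [Matrix.add_mulVec, Matrix.sub_mulVec, Matrix.smul_mulVec,
    Matrix.one_mulVec, ← Matrix.mulVec_mulVec, vecMulVec_mulVec',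
    Matrix.mulVec_add, Matrix.mulVec_sub, Matrix.mulVec_smul, hSSv,
    Matrix.mulVec_neg, dotProduct_add, dotProduct_smul,
    dotProduct_sub, dotProduct_neg, smul_eq_mul]
  match_scalars <;> ring

/-- **Lemma 3.6.** Diagonalization of `R M R^⊤`. -/
theorem RMR_diagonalization
    (d : ℕ) (hd : 1 ≤ d) (z z' : Ed (2 * d))
    (hne : z ≠ z') (hlt : ‖z - z'‖ < 2)
    (vcols : Fin (2 * d - 2) → (Fin (2 * d) → ℝ))
    (horth : ∀ i j, vcols i ⬝ᵥ vcols j = if i = j then (1 : ℝ) else 0)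
    (hv : ∀ i, vcols i ⬝ᵥ vVec d z z' = 0)
    (hSv : ∀ i, vcols i ⬝ᵥ (Smat d).mulVec (vVec d z z') = 0)
    (B : Matrix (Fin (2 * d)) (Fin (2 * d)) ℝ)
    (hB : ∀ i j, B i j =
      if h : j.1 < 2 * d - 2 then vcols ⟨j.1, h⟩ i
      else if j.1 = 2 * d - 2 then (Smat d).mulVec (vVec d z z') i / ‖z - z'‖
      else vVec d z z' i / ‖z - z'‖) :
    Bᵀ * (Rmat d z z' * MmatL d z z' * (Rmat d z z')ᵀ) * B =
      Matrix.diagonal (fun j =>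
        if j.1 < 2 * d - 2 then ‖z - z'‖ ^ 2 * Real.cos (SfrC z z') ^ 2
        else if j.1 = 2 * d - 2 then ‖z - z'‖ ^ 2 else 0) := by
  classical
  set S := Smat d with hSdef
  set v := vVec d z z' with hvdef
  set c := Real.cos (SfrC z z') with hcdef
  set s := Real.sin (SfrC z z') with hsdef
  set r := ‖z - z'‖ with hrdef
  have hT : Sᵀ = -S := Smat_transpose d
  have hSS : S * S = -1 := Smat_mul_self d
  have hsc : s ^ 2 + c ^ 2 = 1 := Real.sin_sq_add_cos_sq _
  have hr0 : r ≠ 0 := by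
    rw [hrdef]
    simpa [sub_eq_zero] using hne
  have hvv : v ⬝ᵥ v = r ^ 2 := by
    have h1 : ‖z - z'‖ ^ 2 = ∑ i, ((z - z') i) ^ 2 := by
      rw [EuclideanSpace.norm_eq, Real.sq_sqrt (by positivity)]
      simp [Real.norm_eq_abs, sq_abs]
    rw [hrdef, h1]
    simp [dotProduct, hvdef, vVec, sq]
  have hskew : ∀ a b : Fin (2 * d) → ℝ, a ⬝ᵥ (S *ᵥ b) = -((S *ᵥ a) ⬝ᵥ b) := by
    intro a b
    rw [Matrix.dotProduct_mulVec, ← Matrix.mulVec_transpose, hT, Matrix.neg_mulVec,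
      neg_dotProduct]
  have hvSv : v ⬝ᵥ (S *ᵥ v) = 0 := by
    have h := hskew v v
    rw [dotProduct_comm (S *ᵥ v) v] at h
    linarith
  have hSSv : ∀ x : Fin (2 * d) → ℝ, S *ᵥ (S *ᵥ x) = -x := by
    intro x
    rw [Matrix.mulVec_mulVec, hSS, Matrix.neg_mulVec, Matrix.one_mulVec]
  have hSvSv : (S *ᵥ v) ⬝ᵥ (S *ᵥ v) = r ^ 2 := by
    rw [hskew, hSSv, neg_dotProduct, neg_neg, hvv]
  -- identification of the matrices with the abstract form
  have hRM : Rmat d z z' = c • (1 : Matrix (Fin (2 * d)) (Fin (2 * d)) ℝ) - s • S := rfl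
  have hMM : MmatL d z z' =
      vecMulVec v v - (2 * c ^ 2) • vecMulVec v v +
        (c ^ 2 * (v ⬝ᵥ v)) • (1 : Matrix (Fin (2 * d)) (Fin (2 * d)) ℝ) +
        (s * c) • (vecMulVec v v * S - S * vecMulVec v v) := rfl
  set N := Rmat d z z' * MmatL d z z' * (Rmat d z z')ᵀ with hNdef
  -- the three eigen-equations
  have E1 : N *ᵥ v = 0 := by
    rw [hNdef, hRM, hMM, RMR_mulVec S v v s c hT hSS, hvSv, hvv]
    match_scalars <;>
      first
        | ring1
        | linear_combination (-(c ^ 2 * r ^ 2)) * hsc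
        | linear_combination (c * s * r ^ 2) * hsc
        | linear_combination (r ^ 2 + c ^ 2 * r ^ 2) * hsc
        | linear_combination (c ^ 2 * r ^ 2) * hsc
  have E2 : N *ᵥ (S *ᵥ v) = (r ^ 2) • (S *ᵥ v) := by
    rw [hNdef, hRM, hMM, RMR_mulVec S v (S *ᵥ v) s c hT hSS, hvSv, hSSv,
      dotProduct_neg, hvv]
    match_scalars <;>
      first
        | ring1
        | linear_combination (-(c ^ 2 * r ^ 2)) * hsc
        | linear_combination (c * s * r ^ 2) * hsc
        | linear_combination (r ^ 2 + c ^ 2 * r ^ 2) * hsc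
        | linear_combination (c ^ 2 * r ^ 2) * hsc
  have E3 : ∀ w : Fin (2 * d) → ℝ, v ⬝ᵥ w = 0 → (S *ᵥ v) ⬝ᵥ w = 0 →
      N *ᵥ w = (r ^ 2 * c ^ 2) • w := by
    intro w h1 h2
    have h3 : v ⬝ᵥ (S *ᵥ w) = 0 := by
      rw [hskew, h2, neg_zero]
    rw [hNdef, hRM, hMM, RMR_mulVec S v w s c hT hSS, h1, h3, hvv]
    match_scalars <;>
      first
        | ring1
        | linear_combination (-(c ^ 2 * r ^ 2)) * hsc
        | linear_combination (c * s * r ^ 2) * hsc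
        | linear_combination (r ^ 2 + c ^ 2 * r ^ 2) * hsc
        | linear_combination (c ^ 2 * r ^ 2) * hsc
  -- columns of B
  have hcol : ∀ j : Fin (2 * d), (fun k => B k j) =
      if h : j.1 < 2 * d - 2 then vcols ⟨j.1, h⟩
      else if j.1 = 2 * d - 2 then r⁻¹ • (S *ᵥ v) else r⁻¹ • v := by
    intro j
    funext k
    rw [hB]
    split_ifs with h1 h2
    · rfl
    · simp [Pi.smul_apply, smul_eq_mul, div_eq_inv_mul]
    · simp [Pi.smul_apply, smul_eq_mul, div_eq_inv_mul]
  set dfun : Fin (2 * d) → ℝ := fun j =>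
      if j.1 < 2 * d - 2 then r ^ 2 * c ^ 2
      else if j.1 = 2 * d - 2 then r ^ 2 else 0 with hdfun
  have key : ∀ j : Fin (2 * d), N *ᵥ (fun k => B k j) = dfun j • (fun k => B k j) := by
    intro j
    rw [hcol j, hdfun]
    by_cases h1 : j.1 < 2 * d - 2
    · rw [dif_pos h1]
      simp only [h1, if_true]
      exact E3 _ (by rw [dotProduct_comm]; exact hv _)
        (by rw [dotProduct_comm]; exact hSv _)
    · rw [dif_neg h1]
      by_cases h2 : j.1 = 2 * d - 2
      · simp only [h1, h2, if_false, if_true]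
        rw [if_neg (lt_irrefl _), Matrix.mulVec_smul, E2, smul_comm]
      · simp only [h1, h2, if_false]
        rw [Matrix.mulVec_smul, E1, smul_zero, zero_smul]
  have hNB : N * B = B * Matrix.diagonal dfun := by
    ext i j
    rw [Matrix.mul_diagonal]
    have h1 : (N * B) i j = (N *ᵥ (fun k => B k j)) i := by
      simp [Matrix.mul_apply, Matrix.mulVec, dotProduct]
    rw [h1, key j]
    simp [mul_comm]
  have hBB : Bᵀ * B = 1 := by
    ext i j
    have h1 : (Bᵀ * B) i j = (fun k => B k i) ⬝ᵥ (fun k => B k j) := by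
      simp [Matrix.mul_apply, dotProduct, Matrix.transpose_apply]
    rw [h1, hcol i, hcol j, Matrix.one_apply]
    have hij : (i = j) ↔ (i.1 = j.1) := Fin.ext_iff
    by_cases hi1 : i.1 < 2 * d - 2 <;> by_cases hj1 : j.1 < 2 * d - 2
    · rw [dif_pos hi1, dif_pos hj1, horth]
      by_cases hij2 : i = j
      · have heq : (⟨i.1, hi1⟩ : Fin (2 * d - 2)) = ⟨j.1, hj1⟩ :=
          Fin.ext (by simpa using hij.mp hij2)
        rw [if_pos heq, if_pos hij2]
      · have hneq : (⟨i.1, hi1⟩ : Fin (2 * d - 2)) ≠ ⟨j.1, hj1⟩ :=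
          fun hh => hij2 (hij.mpr (by simpa using congrArg Fin.val hh))
        rw [if_neg hneq, if_neg hij2]
    · rw [dif_pos hi1, dif_neg hj1]
      have hne2 : i ≠ j := by intro hh; rw [hh] at hi1; exact hj1 hi1
      rw [if_neg hne2]
      by_cases hj2 : j.1 = 2 * d - 2
      · rw [if_pos hj2]
        rw [dotProduct_smul, smul_eq_mul, hSv, mul_zero]
      · rw [if_neg hj2, dotProduct_smul, smul_eq_mul, hv, mul_zero]
    · rw [dif_neg hi1, dif_pos hj1]
      have hne2 : i ≠ j := by intro hh; rw [← hh] at hj1; exact hi1 hj1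
      rw [if_neg hne2]
      by_cases hi2 : i.1 = 2 * d - 2
      · rw [if_pos hi2, smul_dotProduct, smul_eq_mul,
          dotProduct_comm, hSv, mul_zero]
      · rw [if_neg hi2, smul_dotProduct, smul_eq_mul,
          dotProduct_comm, hv, mul_zero]
    · rw [dif_neg hi1, dif_neg hj1]
      by_cases hi2 : i.1 = 2 * d - 2 <;> by_cases hj2 : j.1 = 2 * d - 2
      · have hij3 : i = j := Fin.ext (by omega)
        rw [if_pos hi2, if_pos hj2, if_pos hij3]
        rw [smul_dotProduct, dotProduct_smul, smul_eq_mul, smul_eq_mul, hSvSv]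
        field_simp
      · have hne2 : i ≠ j := by intro hh; rw [hh] at hi2; exact hj2 hi2
        rw [if_pos hi2, if_neg hj2, if_neg hne2]
        rw [smul_dotProduct, dotProduct_smul, smul_eq_mul, smul_eq_mul,
          dotProduct_comm, hvSv]
        ring
      · have hne2 : i ≠ j := by intro hh; rw [hh] at hi2; exact hi2 hj2
        rw [if_neg hi2, if_pos hj2, if_neg hne2]
        rw [smul_dotProduct, dotProduct_smul, smul_eq_mul, smul_eq_mul, hvSv]
        ring
      · have hij3 : i = j := by
          have := i.2; have := j.2
          exact Fin.ext (by omega)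
        rw [if_neg hi2, if_neg hj2, if_pos hij3]
        rw [smul_dotProduct, dotProduct_smul, smul_eq_mul, smul_eq_mul, hvv]
        field_simp
  calc Bᵀ * N * B = Bᵀ * (N * B) := by rw [Matrix.mul_assoc]
    _ = Bᵀ * (B * Matrix.diagonal dfun) := by rw [hNB]
    _ = (Bᵀ * B) * Matrix.diagonal dfun := by rw [Matrix.mul_assoc]
    _ = Matrix.diagonal dfun := by rw [hBB, Matrix.one_mul]


end Paper
end
end
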